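/- arXiv:2303.02100 — 6 statements merged into one kernel-verified Lean document; each statement's English description precedes it below -/
import Mathlib

section
/- Let K be a field with valuation v, let L/K be a finite separable field extension, let α ∈ L with L = K[α], and let f ∈ O_v[T] be irreducible in K[T] with f(α) = 0. Assume the residue polynomial f̄ ∈ Kv[T] is nonconstant, and let q be an irreducible factor of f̄ in Kv[T]. Then there exists an extension w of v to L such that α ∈ O_w and q(ᾱ) = 0 in the residue field Lw. -/
open IsLocalRing Polynomial

namespace ValuationSubring

variable {K : Type*} [Field K]

/-- `v(x) = 0`, i.e. `x` is a unit of the valuation ring. -/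
def IsUnitVal (A : ValuationSubring K) (x : K) : Prop :=
  x ≠ 0 ∧ x ∈ A ∧ x⁻¹ ∈ A

/-- `v(x) ≤ v(y)`. -/
def VLE (A : ValuationSubring K) (x y : K) : Prop :=
  (x = 0 → y = 0) ∧ (x ≠ 0 → y / x ∈ A)

/-- `v(x) = v(y)`. -/
def VEq (A : ValuationSubring K) (x y : K) : Prop :=
  A.VLE x y ∧ A.VLE y x

/-- `v(x) < v(y)`. -/
def VLT (A : ValuationSubring K) (x y : K) : Prop :=
  ¬ A.VLE y x

/-- `v(x) ∈ n·vK`. -/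
def ValMultipleOf (A : ValuationSubring K) (n : ℕ) (x : K) : Prop :=
  ∃ y : K, y ≠ 0 ∧ A.IsUnitVal (x / y ^ n)

variable {L : Type*} [Field L] [Algebra K L]

/-- `w` is an extension of `v` to `L`. -/
def IsExtension (A : ValuationSubring K) (B : ValuationSubring L) : Prop :=
  B.comap (algebraMap K L) = A

/-- The induced embedding of valuation rings for an extension of valuations. -/
def extHom {A : ValuationSubring K} {B : ValuationSubring L} (h : A.IsExtension B) :
    A →+* B :=
  ((algebraMap K L).comp A.subtype).codRestrict B.toSubring fun a =>
    mem_comap.mp ((SetLike.ext_iff.mp h (a : K)).mpr a.2)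

theorem extHom_isLocalHom {A : ValuationSubring K} {B : ValuationSubring L}
    (h : A.IsExtension B) : IsLocalHom (extHom h) := by
  constructor
  intro a ha
  obtain ⟨b, hb⟩ := isUnit_iff_exists_inv.mp ha
  have hb' : algebraMap K L (a : K) * (b : L) = 1 := congrArg Subtype.val hb
  have ha0 : (a : K) ≠ 0 := by
    intro h0
    rw [h0, map_zero, zero_mul] at hb'
    exact zero_ne_one hb'
  have ha0' : algebraMap K L (a : K) ≠ 0 := by
    simpa using ha0
  have hbL : (b : L) = algebraMap K L ((a : K)⁻¹) := by
    rw [map_inv₀]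
    exact eq_inv_of_mul_eq_one_right hb'
  have hinv : (a : K)⁻¹ ∈ A := by
    refine (SetLike.ext_iff.mp h ((a : K)⁻¹)).mp (mem_comap.mpr ?_)
    rw [← hbL]; exact b.2
  refine isUnit_iff_exists_inv.mpr ⟨⟨(a : K)⁻¹, hinv⟩, ?_⟩
  ext
  exact mul_inv_cancel₀ ha0

/-- The induced embedding of residue fields for an extension of valuations. -/
noncomputable def resMap {A : ValuationSubring K} {B : ValuationSubring L}
    (h : A.IsExtension B) : ResidueField A →+* ResidueField B :=
  letI := extHom_isLocalHom h
  ResidueField.map (extHom h)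

end ValuationSubring

/-- The index `[wL : vK]` of the value group of `v` inside the value group of an
extension `w` (given by a valuation subring `B` of `L`): the index in `Lˣ` of the
subgroup generated by the image of `Kˣ` and the units of `B`. -/
noncomputable def ValuationSubring.valueGroupIndex (K : Type*) [Field K] {L : Type*}
    [Field L] [Algebra K L] (B : ValuationSubring L) : ℕ :=
  (Subgroup.map (Units.map (algebraMap K L : K →+* L).toMonoidHom) ⊤ ⊔ B.unitGroup).index

section FF

variable (E F : Type*) [Field E] [Field F] [Algebra E F]

/-- `F/E` is a function field in one variable. -/
def IsFunctionFieldOneVar : Prop :=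
  ∃ x : F, Transcendental E x ∧
    FiniteDimensional (IntermediateField.adjoin E {x}) F

/-- `F/E` is a rational function field. -/
def IsRationalFF : Prop :=
  ∃ x : F, Transcendental E x ∧ IntermediateField.adjoin E {x} = ⊤

/-- `F/E` is ruled: `F = E'(x)` for a finite extension `E'/E`. -/
def IsRuled : Prop :=
  ∃ (E' : IntermediateField E F) (x : F), FiniteDimensional E E' ∧
    Transcendental E' x ∧ IntermediateField.adjoin E' {x} = ⊤

end FF


open ValuationSubring IsLocalRing Polynomial


section AuxGauss

variable {K : Type*} [Field K]

theorem vs_exists_div_mem (A : ValuationSubring K) (s : Finset ℕ) (g : ℕ → K)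
    (hs : s.Nonempty) (h0 : ∀ i ∈ s, g i ≠ 0) :
    ∃ j ∈ s, ∀ i ∈ s, g i / g j ∈ A := by
  classical
  induction s using Finset.induction_on with
  | empty => exact absurd hs (by simp)
  | @insert a t hat ih =>
    rcases t.eq_empty_or_nonempty with rfl | ht
    · refine ⟨a, Finset.mem_insert_self _ _, ?_⟩
      intro i hi
      rw [Finset.mem_insert] at hi
      rcases hi with rfl | hi
      · rw [div_self (h0 i (Finset.mem_insert_self _ _))]; exact ValuationSubring.one_mem A
      · simp at hi
    · obtain ⟨j, hj, hjall⟩ := ih ht (fun i hi => h0 i (Finset.mem_insert_of_mem hi))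
      rcases A.mem_or_inv_mem (g a / g j) with h | h
      · refine ⟨j, Finset.mem_insert_of_mem hj, ?_⟩
        intro i hi
        rcases Finset.mem_insert.mp hi with rfl | hi
        · exact h
        · exact hjall i hi
      · rw [inv_div] at h
        refine ⟨a, Finset.mem_insert_self _ _, ?_⟩
        intro i hi
        rcases Finset.mem_insert.mp hi with rfl | hi
        · rw [div_self (h0 i (Finset.mem_insert_self _ _))]; exact ValuationSubring.one_mem A
        · have hgj : g j ≠ 0 := h0 j (Finset.mem_insert_of_mem hj)
          have heq : g i / g j * (g j / g a) = g i / g a := by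
            field_simp
          exact heq ▸ mul_mem (hjall i hi) h

theorem vs_gauss (A : ValuationSubring K) (f p : Polynomial A)
    (hf0 : f.map (IsLocalRing.residue A) ≠ 0)
    (hdvd : f.map (algebraMap A K) ∣ p.map (algebraMap A K)) :
    f.map (IsLocalRing.residue A) ∣ p.map (IsLocalRing.residue A) := by
  classical
  have hAK : (algebraMap A K : A →+* K) = A.toSubring.subtype := rfl
  have hinj : Function.Injective (algebraMap A K) := Subtype.coe_injective
  by_cases hp : p = 0
  · simp [hp]
  obtain ⟨g, hg⟩ := hdvd
  have hpK : p.map (algebraMap A K) ≠ 0 :=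
    (Polynomial.map_ne_zero_iff hinj).mpr hp
  have hgne : g ≠ 0 := by
    rintro rfl
    rw [mul_zero] at hg
    exact hpK hg
  obtain ⟨j, hj, hjall⟩ := vs_exists_div_mem A g.support (fun i => g.coeff i)
    (Polynomial.support_nonempty.mpr hgne) (fun i hi => Polynomial.mem_support_iff.mp hi)
  set c : K := g.coeff j with hc
  have hc0 : c ≠ 0 := Polynomial.mem_support_iff.mp hj
  set G : Polynomial K := Polynomial.C c⁻¹ * g with hG
  have hGcoeff : ∀ i, G.coeff i ∈ A := by
    intro i
    rw [hG, Polynomial.coeff_C_mul]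
    by_cases hi : i ∈ g.support
    · have := hjall i hi
      rwa [div_eq_mul_inv, mul_comm] at this
    · rw [Polynomial.notMem_support_iff.mp hi, mul_zero]
      exact ValuationSubring.zero_mem A
  have hGmem : (↑G.coeffs : Set K) ⊆ A.toSubring := by
    intro x hx
    obtain ⟨n, _, rfl⟩ := Polynomial.mem_coeffs_iff.mp hx
    exact hGcoeff n
  set g₁ : Polynomial A.toSubring := G.toSubring A.toSubring hGmem with hg₁
  have hg₁map : g₁.map (algebraMap A K) = G := Polynomial.map_toSubring _ _ _
  have hg₁j : g₁.coeff j = 1 := by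
    have : (g₁.coeff j : K) = G.coeff j := Polynomial.coeff_toSubring' _ _ _
    have h2 : G.coeff j = 1 := by
      rw [hG, Polynomial.coeff_C_mul, ← hc, inv_mul_cancel₀ hc0]
    exact Subtype.ext (by rw [this, h2]; rfl)
  have hg₁bar : g₁.map (IsLocalRing.residue A) ≠ 0 := by
    intro h
    have := congrArg (fun q => Polynomial.coeff q j) h
    simp only [Polynomial.coeff_map, hg₁j, map_one, Polynomial.coeff_zero] at this
    exact one_ne_zero this
  have hcmem : c ∈ A := by
    by_contra hcA
    have hcinv : c⁻¹ ∈ A := (A.mem_or_inv_mem c).resolve_left hcA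
    have hcnu : ¬ IsUnit (⟨c⁻¹, hcinv⟩ : A) := by
      intro hu
      obtain ⟨b, hb⟩ := isUnit_iff_exists_inv.mp hu
      apply hcA
      have hb' : (b : K) * c⁻¹ = 1 := congrArg Subtype.val (mul_comm _ b ▸ hb)
      have : (b : K) = c := by
        field_simp at hb'
        simpa using hb'
      exact this ▸ b.2
    have hid : f * g₁ = Polynomial.C (⟨c⁻¹, hcinv⟩ : A) * p := by
      apply Polynomial.map_injective _ hinj
      rw [Polynomial.map_mul, Polynomial.map_mul, Polynomial.map_C, hg, hg₁map, hG,
        ValuationSubring.algebraMap_apply]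
      ring
    have hres := congrArg (Polynomial.map (IsLocalRing.residue A)) hid
    rw [Polynomial.map_mul, Polynomial.map_mul, Polynomial.map_C] at hres
    have hres0 : IsLocalRing.residue A (⟨c⁻¹, hcinv⟩ : A) = 0 :=
      Ideal.Quotient.eq_zero_iff_mem.mpr ((IsLocalRing.mem_maximalIdeal _).mpr hcnu)
    rw [hres0, Polynomial.C_0, zero_mul] at hres
    rcases mul_eq_zero.mp hres with h | h
    · exact hf0 h
    · exact hg₁bar h
  have hid : p = f * (Polynomial.C (⟨c, hcmem⟩ : A) * g₁) := by
    apply Polynomial.map_injective _ hinj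
    rw [Polynomial.map_mul, Polynomial.map_mul, Polynomial.map_C, hg, hg₁map, hG,
      ValuationSubring.algebraMap_apply,
      ← mul_assoc (Polynomial.C c), ← Polynomial.C_mul, mul_inv_cancel₀ hc0,
      Polynomial.C_1, one_mul]
  refine ⟨Polynomial.C (IsLocalRing.residue A ⟨c, hcmem⟩) * g₁.map (IsLocalRing.residue A), ?_⟩
  rw [hid, Polynomial.map_mul, Polynomial.map_mul, Polynomial.map_C]

end AuxGauss

set_option maxHeartbeats 2000000 in
/-- existence of an extension of the valuation in which a prescribed
irreducible factor of the residue polynomial kills the residue of the generator. -/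
theorem stmt_1 {K L : Type*} [Field K] [Field L] [Algebra K L]
    [FiniteDimensional K L] [Algebra.IsSeparable K L]
    (A : ValuationSubring K) (α : L) (hgen : Algebra.adjoin K {α} = ⊤)
    (f : Polynomial A)
    (hirr : Irreducible (f.map (algebraMap A K)))
    (hroot : Polynomial.aeval α (f.map (algebraMap A K)) = 0)
    (hnc : 0 < (f.map (IsLocalRing.residue A)).natDegree)
    (q : Polynomial (ResidueField A)) (hq : Irreducible q)
    (hdvd : q ∣ f.map (IsLocalRing.residue A)) :
    ∃ (B : ValuationSubring L) (h : A.IsExtension B) (hα : α ∈ B),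
      Polynomial.eval₂ (ValuationSubring.resMap h)
        (IsLocalRing.residue B ⟨α, hα⟩) q = 0 := by
  classical
  haveI : Fact (Irreducible q) := ⟨hq⟩
  set ψ : Polynomial A →+* AdjoinRoot q :=
    eval₂RingHom ((AdjoinRoot.of q).comp (IsLocalRing.residue A)) (AdjoinRoot.root q) with hψdef
  set θ : Polynomial A →+* L :=
    eval₂RingHom ((algebraMap K L).comp (algebraMap A K)) α with hθdef
  have hf0 : f.map (IsLocalRing.residue A) ≠ 0 := by
    intro h
    rw [h] at hnc
    simp at hnc
  have hψmk : ∀ p : Polynomial A, ψ p = AdjoinRoot.mk q (p.map (IsLocalRing.residue A)) := by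
    intro p
    rw [hψdef, coe_eval₂RingHom, ← Polynomial.eval₂_map, ← AdjoinRoot.algebraMap_eq,
      ← Polynomial.aeval_def, AdjoinRoot.aeval_eq]
  -- kernel inclusion
  have hker : RingHom.ker θ.rangeRestrict ≤ RingHom.ker ψ := by
    rw [RingHom.ker_rangeRestrict]
    intro p hp
    rw [RingHom.mem_ker] at hp ⊢
    rw [hψmk, AdjoinRoot.mk_eq_zero]
    have hpα : Polynomial.aeval α (p.map (algebraMap A K)) = 0 := by
      rw [Polynomial.aeval_def, Polynomial.eval₂_map]
      exact hp
    -- fK ∣ pK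
    have hm : minpoly K α ∣ f.map (algebraMap A K) := minpoly.dvd K α hroot
    obtain ⟨cc, hcc⟩ := hm
    have hccu : IsUnit cc :=
      (hirr.isUnit_or_isUnit hcc).resolve_left (minpoly.not_isUnit K α)
    obtain ⟨u, rfl⟩ := hccu
    have hassoc : Associated (minpoly K α) (f.map (algebraMap A K)) := ⟨u, hcc.symm⟩
    have hfd : f.map (algebraMap A K) ∣ p.map (algebraMap A K) :=
      hassoc.symm.dvd.trans (minpoly.dvd K α hpα)
    exact hdvd.trans (vs_gauss A f p hf0 hfd)
  set φ : θ.range →+* AdjoinRoot q :=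
    θ.rangeRestrict.liftOfSurjective θ.rangeRestrict_surjective ⟨ψ, hker⟩ with hφdef
  have hφ : ∀ p, φ (θ.rangeRestrict p) = ψ p := fun p =>
    RingHom.liftOfRightInverse_comp_apply _ _ _ _ p
  haveI hprime : (RingHom.ker φ).IsPrime := RingHom.ker_isPrime φ
  set Rloc := LocalSubring.ofPrime θ.range (RingHom.ker φ) with hRlocdef
  obtain ⟨B, h1, h2⟩ := Rloc.exists_le_valuationSubring
  have hRR : (θ.range : Subring L) ≤ Rloc.toSubring := LocalSubring.le_ofPrime _ _
  have hRB : (θ.range : Subring L) ≤ B.toSubring := hRR.trans h1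
  have hmemR : ∀ p : Polynomial A, θ p ∈ θ.range := fun p => ⟨p, rfl⟩
  -- nonunits from ψ-vanishing
  have hnonunit : ∀ p : Polynomial A, ψ p = 0 →
      ¬ IsUnit (⟨θ p, hRB (hmemR p)⟩ : B.toSubring) := by
    intro p hψp hu
    have e1 : (Subring.inclusion h1 ⟨θ p, hRR (hmemR p)⟩ : B.toSubring)
        = ⟨θ p, hRB (hmemR p)⟩ := Subtype.ext rfl
    have hu2 : IsUnit (⟨θ p, hRR (hmemR p)⟩ : Rloc.toSubring) :=
      h2.map_nonunit _ (by rwa [e1])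
    have e2 : (⟨θ p, hRR (hmemR p)⟩ : Rloc.toSubring)
        = algebraMap θ.range Rloc.toSubring (θ.rangeRestrict p) := Subtype.ext rfl
    rw [e2] at hu2
    have hcompl := (IsLocalization.AtPrime.isUnit_to_map_iff Rloc.toSubring
      (RingHom.ker φ) (θ.rangeRestrict p)).mp hu2
    exact hcompl (RingHom.mem_ker.mpr ((hφ p).trans hψp))
  -- α and constants in B
  have hθX : θ X = α := by rw [hθdef, coe_eval₂RingHom, Polynomial.eval₂_X]
  have hθC : ∀ a : A, θ (C a) = algebraMap K L (a : K) := by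
    intro a
    rw [hθdef, coe_eval₂RingHom, Polynomial.eval₂_C, RingHom.comp_apply,
      ValuationSubring.algebraMap_apply]
  have hα : α ∈ B := hθX ▸ hRB (hmemR X)
  have hconst : ∀ a : A, algebraMap K L (a : K) ∈ B := fun a => (hθC a) ▸ hRB (hmemR (C a))
  -- the extension property
  have hψC : ∀ a : A, ψ (C a) = AdjoinRoot.of q (IsLocalRing.residue A a) := by
    intro a
    rw [hψdef, coe_eval₂RingHom, Polynomial.eval₂_C, RingHom.comp_apply]
  have hext : A.IsExtension B := by
    have hle : A.toLocalSubring ≤ (B.comap (algebraMap K L)).toLocalSubring := by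
      refine ⟨fun a ha => ValuationSubring.mem_comap.mpr (hconst ⟨a, ha⟩), ⟨?_⟩⟩
      intro a hu
      by_contra hnu
      -- a is a nonunit of A, hence residue a = 0, hence θ (C a) is a nonunit of B
      have hres : IsLocalRing.residue A a = 0 :=
        Ideal.Quotient.eq_zero_iff_mem.mpr ((IsLocalRing.mem_maximalIdeal _).mpr hnu)
      have hψa : ψ (C a) = 0 := by rw [hψC a, hres, map_zero]
      apply hnonunit (C a) hψa
      -- but `a` being a unit in the comap makes θ (C a) a unit of B
      obtain ⟨b, hb⟩ := isUnit_iff_exists_inv.mp hu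
      refine isUnit_iff_exists_inv.mpr ⟨⟨algebraMap K L (b : K), ValuationSubring.mem_comap.mp b.2⟩, ?_⟩
      ext
      have hab : (a : K) * (b : K) = 1 := congrArg Subtype.val hb
      show θ (C a) * algebraMap K L (b : K) = 1
      rw [hθC a, ← map_mul, hab, map_one]
    have := A.isMax_toLocalSubring hle
    have hsub : (B.comap (algebraMap K L)).toSubring = A.toSubring :=
      le_antisymm this.1 hle.1
    exact ValuationSubring.toSubring_injective hsub
  refine ⟨B, hext, hα, ?_⟩
  -- final residue computation
  haveI := extHom_isLocalHom hext
  obtain ⟨Q, hQ⟩ := Polynomial.map_surjective (IsLocalRing.residue A)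
    Ideal.Quotient.mk_surjective q
  have hcomp : (resMap hext).comp (IsLocalRing.residue A)
      = (IsLocalRing.residue B).comp (extHom hext) := by
    ext a
    exact IsLocalRing.ResidueField.map_residue (extHom hext) a
  rw [← hQ, Polynomial.eval₂_map, hcomp]
  have hαeq : IsLocalRing.residue B ⟨α, hα⟩
      = IsLocalRing.residue B (⟨α, hα⟩ : B.toSubring) := rfl
  rw [hαeq, ← Polynomial.hom_eval₂]
  -- the evaluated element equals θ Q
  have hyval : B.subtype (Polynomial.eval₂ (extHom hext) (⟨α, hα⟩ : B.toSubring) Q) = θ Q := by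
    rw [Polynomial.hom_eval₂ Q (extHom hext) B.subtype]
    rfl
  have hψQ : ψ Q = 0 := by rw [hψmk, hQ, AdjoinRoot.mk_self]
  have hne : ¬ IsUnit (Polynomial.eval₂ (extHom hext) (⟨α, hα⟩ : B.toSubring) Q) := by
    have he : Polynomial.eval₂ (extHom hext) (⟨α, hα⟩ : B.toSubring) Q
        = ⟨θ Q, hRB (hmemR Q)⟩ := Subtype.ext hyval
    rw [he]
    exact hnonunit Q hψQ
  exact Ideal.Quotient.eq_zero_iff_mem.mpr ((IsLocalRing.mem_maximalIdeal _).mpr hne)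
end

section
/- Let K be a field with valuation v and p a prime with v(p)=0. Let a ∈ K^× \ K^{×p} with v(a) ∈ p·vK, and let u ∈ aK^{×p} ∩ O_v^×. If the residue ū is not a p-th power in the residue field Kv, then v extends uniquely to L = K[p-th root of a], and for this extension w the residue field is Lw = Kv[p-th root of ū]. -/
open IsLocalRing Polynomial

open ValuationSubring IsLocalRing Polynomial


lemma exists_val_min {K : Type*} [Field K] (A : ValuationSubring K) {ι : Type*}
    (c : ι → K) : ∀ (s : Finset ι), (∀ i ∈ s, c i ≠ 0) → s.Nonempty →
    ∃ j ∈ s, ∀ i ∈ s, c i / c j ∈ A := by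
  classical
  intro s
  induction s using Finset.induction_on with
  | empty => rintro _ ⟨x, hx⟩; simp at hx
  | @insert a s ha ih =>
    intro hc _
    rcases s.eq_empty_or_nonempty with rfl | hs
    · refine ⟨a, by simp, ?_⟩
      intro i hi
      simp only [Finset.mem_insert, Finset.notMem_empty, or_false] at hi
      subst hi
      rw [div_self (hc i (by simp))]
      exact A.one_mem
    · obtain ⟨j, hjs, hj⟩ := ih (fun i hi => hc i (Finset.mem_insert_of_mem hi)) hs
      have hja : c j ≠ 0 := hc j (Finset.mem_insert_of_mem hjs)
      have haa : c a ≠ 0 := hc a (Finset.mem_insert_self a s)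
      rcases A.mem_or_inv_mem (c a / c j) with h1 | h1
      · refine ⟨j, Finset.mem_insert_of_mem hjs, ?_⟩
        intro i hi
        rcases Finset.mem_insert.mp hi with rfl | hi
        · exact h1
        · exact hj i hi
      · rw [inv_div] at h1
        refine ⟨a, Finset.mem_insert_self a s, ?_⟩
        intro i hi
        rcases Finset.mem_insert.mp hi with rfl | hi
        · rw [div_self haa]; exact A.one_mem
        · have h2 := A.mul_mem _ _ (hj i hi) h1
          rwa [div_mul_div_comm, mul_comm (c j) (c a), mul_div_mul_right _ _ hja] at h2

set_option maxHeartbeats 2000000 in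
set_option synthInstance.maxHeartbeats 400000 in
/-- if moreover the residue of a unit `u` in the coset `aK^{×p}` is not a
`p`-th power in the residue field, then `v` extends uniquely to `K[p-th root of a]`,
and the residue field of the extension is obtained by adjoining a `p`-th root of `ū`. -/
theorem stmt_4 {K L : Type*} [Field K] [Field L] [Algebra K L]
    (p : ℕ) (hp : p.Prime) (A : ValuationSubring K) (hvp : A.IsUnitVal (p : K))
    (a : K) (ha : a ≠ 0) (hnp : ¬ ∃ y : K, y ^ p = a)
    (hvap : A.ValMultipleOf p a)
    (α : L) (hα : α ^ p = algebraMap K L a) (hgen : Algebra.adjoin K {α} = ⊤)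
    (u : K) (hu : u ∈ A) (hu' : u⁻¹ ∈ A) (hu0 : u ≠ 0)
    (hcos : ∃ y : K, y ≠ 0 ∧ u = a * y ^ p)
    (hres : ¬ ∃ c : ResidueField A, c ^ p = IsLocalRing.residue A ⟨u, hu⟩) :
    (∃! B : ValuationSubring L, A.IsExtension B) ∧
    ∀ (B : ValuationSubring L) (h : A.IsExtension B),
      letI := (ValuationSubring.resMap h).toAlgebra
      ∃ β : ResidueField B,
        β ^ p = ValuationSubring.resMap h (IsLocalRing.residue A ⟨u, hu⟩) ∧
        Algebra.adjoin (ResidueField A) {β} = ⊤ := by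
  classical
  obtain ⟨y, hy0, hyu⟩ := hcos
  set β : L := α * algebraMap K L y with hβ_def
  have hβp : β ^ p = algebraMap K L u := by
    rw [hβ_def, mul_pow, hα, ← map_pow, ← map_mul, ← hyu]
  have huL0 : algebraMap K L u ≠ 0 := fun h => hu0 ((algebraMap K L).injective (by rw [h, map_zero]))
  have hβ0 : β ≠ 0 := fun h => huL0 (by rw [← hβp, h, zero_pow hp.ne_zero])
  have hunp : ∀ b : K, b ^ p ≠ u := by
    intro b hb
    exact hnp ⟨b / y, by rw [div_pow, hb, hyu, mul_div_assoc, div_self (pow_ne_zero _ hy0), mul_one]⟩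
  have hMK_irr : Irreducible ((X : K[X]) ^ p - C u) := X_pow_sub_C_irreducible_of_prime hp hunp
  have hMKmonic : ((X : K[X]) ^ p - C u).Monic := monic_X_pow_sub_C u hp.ne_zero
  have hβroot : Polynomial.aeval β ((X : K[X]) ^ p - C u) = 0 := by
    rw [map_sub, map_pow, aeval_X, aeval_C, hβp, sub_self]
  have hdegMK : ((X : K[X]) ^ p - C u).degree = (p : ℕ) := degree_X_pow_sub_C hp.pos u
  have hMP : ∀ f : K[X], f ≠ 0 → f.degree < (p : ℕ) → Polynomial.aeval β f ≠ 0 := by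
    intro f hf hdeg hev
    have h1 := minpoly.degree_le_of_ne_zero K β hf hev
    rw [← minpoly.eq_of_irreducible_of_monic hMK_irr hβroot hMKmonic, hdegMK] at h1
    exact absurd (lt_of_le_of_lt h1 hdeg) (lt_irrefl _)
  have hgenβ : Algebra.adjoin K {β} = ⊤ := by
    rw [_root_.eq_top_iff, ← hgen]
    apply Algebra.adjoin_le
    intro x hx
    rw [Set.mem_singleton_iff] at hx
    have hy' : x = algebraMap K L y⁻¹ * β := by
      rw [hx, hβ_def, map_inv₀, ← mul_assoc, mul_comm _ α, mul_assoc,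
        inv_mul_cancel₀ (fun h => hy0 ((algebraMap K L).injective (by rw [h, map_zero]))), mul_one]
    rw [hy']
    exact mul_mem (Subalgebra.algebraMap_mem _ _) (Algebra.subset_adjoin rfl)
  have hspan : ∀ x : L, ∃ f : K[X], f.degree < (p : ℕ) ∧ Polynomial.aeval β f = x := by
    intro x
    have hx : x ∈ (Polynomial.aeval β : K[X] →ₐ[K] L).range := by
      rw [← Algebra.adjoin_singleton_eq_range_aeval, hgenβ]; trivial
    obtain ⟨f₀, hf₀'⟩ := hx
    have hf₀ : Polynomial.aeval β f₀ = x := hf₀'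
    refine ⟨f₀ %ₘ ((X : K[X]) ^ p - C u), ?_, ?_⟩
    · exact lt_of_lt_of_le (degree_modByMonic_lt f₀ hMKmonic) (le_of_eq hdegMK)
    · conv_rhs => rw [← hf₀, ← modByMonic_add_div f₀ ((X : K[X]) ^ p - C u)]
      rw [map_add, map_mul, hβroot, zero_mul, add_zero]
  -- the polynomial evaluation map with coefficients in A
  set ψ : Polynomial A →+* L := eval₂RingHom ((algebraMap K L).comp A.subtype) β with hψ_def
  have hAB : ∀ (B : ValuationSubring L), A.IsExtension B → ∀ z : K, (z ∈ A ↔ algebraMap K L z ∈ B) := by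
    intro B hB z
    rw [← hB, ValuationSubring.mem_comap]
  have hβmem : ∀ (B : ValuationSubring L), A.IsExtension B → β ∈ B := by
    intro B hB
    rcases B.mem_or_inv_mem β with h | h
    · exact h
    · have hkey : β = algebraMap K L u * (β⁻¹) ^ (p - 1) := by
        rw [inv_pow, ← hβp, eq_comm, mul_inv_eq_iff_eq_mul₀ (pow_ne_zero _ hβ0)]
        conv_lhs => rw [← Nat.succ_pred_eq_of_pos hp.pos]
        rw [pow_succ', Nat.pred_eq_sub_one]
      rw [hkey]
      exact mul_mem ((hAB B hB u).mp hu) (pow_mem h _)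
  have hmemB : ∀ (B : ValuationSubring L), A.IsExtension B → ∀ F : Polynomial A, ψ F ∈ B := by
    intro B hB F
    rw [hψ_def, coe_eval₂RingHom, Polynomial.eval₂_eq_sum, Polynomial.sum_def]
    apply sum_mem
    intro n hn
    exact mul_mem ((hAB B hB _).mp (F.coeff n).2) (pow_mem (hβmem B hB) n)
  -- residue field setup
  set res : A →+* IsLocalRing.ResidueField A := IsLocalRing.residue A with hres_def
  set uA : A := ⟨u, hu⟩ with huA_def
  set M' : Polynomial A := X ^ p - C uA with hM'_def
  have hM'monic : M'.Monic := monic_X_pow_sub_C uA hp.ne_zero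
  have hM'map : M'.map res = X ^ p - C (res uA) := by
    rw [hM'_def, Polynomial.map_sub, Polynomial.map_pow, Polynomial.map_X, Polynomial.map_C]
  have hMbar_irr : Irreducible ((X : (IsLocalRing.ResidueField A)[X]) ^ p - C (res uA)) :=
    X_pow_sub_C_irreducible_of_prime hp (fun b hb => hres ⟨b, hb⟩)
  have hψev : ∀ F : Polynomial A, ψ F = Polynomial.eval₂ ((algebraMap K L).comp A.subtype) β F :=
    fun F => rfl
  have hevM' : Polynomial.eval₂ ((algebraMap K L).comp A.subtype) β M' = 0 := by
    rw [hM'_def, Polynomial.eval₂_sub, Polynomial.eval₂_pow, Polynomial.eval₂_X, Polynomial.eval₂_C]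
    show β ^ p - algebraMap K L u = 0
    rw [hβp, sub_self]
  -- the unit lemma
  have hUL : ∀ G : Polynomial A, G.map res ≠ 0 → (G.map res).degree < (p : ℕ) →
      ∃ H : Polynomial A, ψ G * ψ H = 1 := by
    intro G hG0 hGdeg
    have hndvd : ¬ ((X : (IsLocalRing.ResidueField A)[X]) ^ p - C (res uA)) ∣ G.map res := by
      intro hdvd
      have h2 := Polynomial.degree_le_of_dvd hdvd hG0
      rw [degree_X_pow_sub_C hp.pos] at h2
      exact absurd (lt_of_le_of_lt h2 hGdeg) (lt_irrefl _)
    obtain ⟨Pb, Qb, hPQ⟩ := hMbar_irr.coprime_iff_not_dvd.mpr hndvd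
    obtain ⟨P, hP⟩ := Polynomial.map_surjective res Ideal.Quotient.mk_surjective Pb
    obtain ⟨Q, hQ⟩ := Polynomial.map_surjective res Ideal.Quotient.mk_surjective Qb
    set E : Polynomial A := P * M' + Q * G - 1 with hE
    have hEmap : E.map res = 0 := by
      rw [hE, Polynomial.map_sub, Polynomial.map_add, Polynomial.map_mul, Polynomial.map_mul,
        Polynomial.map_one, hP, hQ, hM'map, hPQ, sub_self]
    have hEcoeff : ∀ n, E.coeff n ∈ IsLocalRing.maximalIdeal A := by
      intro n
      have h3 : (E.map res).coeff n = 0 := by rw [hEmap, Polynomial.coeff_zero]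
      rw [Polynomial.coeff_map] at h3
      exact Ideal.Quotient.eq_zero_iff_mem.mp h3
    letI T := AdjoinRoot M'
    let χ : T →+* L := AdjoinRoot.lift ((algebraMap K L).comp A.subtype) β hevM'
    haveI : Nontrivial T := χ.domain_nontrivial
    haveI : Module.Finite A T := Module.Finite.of_basis (AdjoinRoot.powerBasis' hM'monic).basis
    haveI : Algebra.IsIntegral A T := Algebra.IsIntegral.of_finite A T
    have hGunit : IsUnit (AdjoinRoot.mk M' G) := by
      have h1 : AdjoinRoot.mk M' Q * AdjoinRoot.mk M' G = 1 + AdjoinRoot.mk M' E := by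
        rw [hE, map_sub, map_add, map_mul, map_mul, AdjoinRoot.mk_self, mul_zero, map_one]
        ring
      have h2 : IsUnit (AdjoinRoot.mk M' Q * AdjoinRoot.mk M' G) := by
        rw [h1]
        by_contra hnu
        obtain ⟨Mx, hMx, hmem⟩ := exists_max_ideal_of_mem_nonunits hnu
        have hzmem : AdjoinRoot.mk M' E ∈ Mx := by
          rw [← AdjoinRoot.aeval_eq, Polynomial.aeval_def, Polynomial.eval₂_eq_sum,
            Polynomial.sum_def]
          apply Ideal.sum_mem
          intro n hn
          apply Ideal.mul_mem_right
          have hcomap : Ideal.comap (algebraMap A T) Mx = IsLocalRing.maximalIdeal A :=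
            IsLocalRing.eq_maximalIdeal (Ideal.isMaximal_comap_of_isIntegral_of_isMaximal Mx)
          have h4 : E.coeff n ∈ Ideal.comap (algebraMap A T) Mx := by
            rw [hcomap]; exact hEcoeff n
          exact h4
        have h5 : (1 : T) ∈ Mx := by
          have h6 := Mx.sub_mem hmem hzmem
          simpa using h6
        exact hMx.ne_top (Ideal.eq_top_of_isUnit_mem _ h5 isUnit_one)
      exact isUnit_of_mul_isUnit_right h2
    obtain ⟨w, hw⟩ := hGunit.exists_right_inv
    obtain ⟨H, hH⟩ := AdjoinRoot.mk_surjective w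
    refine ⟨H, ?_⟩
    have hχmk : ∀ F : Polynomial A, χ (AdjoinRoot.mk M' F) = ψ F := fun F =>
      AdjoinRoot.lift_mk hevM' F
    calc ψ G * ψ H = χ (AdjoinRoot.mk M' G) * χ (AdjoinRoot.mk M' H) := by rw [hχmk, hχmk]
    _ = χ (AdjoinRoot.mk M' G * w) := by rw [hH, map_mul]
    _ = 1 := by rw [hw, map_one]
  have hψC : ∀ (c : K) (hc : c ∈ A), ψ (C ⟨c, hc⟩) = algebraMap K L c := by
    intro c hc
    rw [hψev, Polynomial.eval₂_C]
    rfl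
  -- decomposition of an arbitrary nonzero element
  have hdecomp : ∀ x : L, x ≠ 0 → ∃ (cj : K) (G H : Polynomial A),
      cj ≠ 0 ∧ ψ G * ψ H = 1 ∧ x = algebraMap K L cj * ψ G ∧
      (cj ∈ A → ∃ F : Polynomial A, ψ F = x) := by
    intro x hx
    obtain ⟨f, hfdeg, hfx⟩ := hspan x
    have hf0 : f ≠ 0 := fun h => hx (by rw [← hfx, h, map_zero])
    obtain ⟨j, hjs, hj⟩ := exists_val_min A (fun i => f.coeff i) f.support
      (fun i hi => Polynomial.mem_support_iff.mp hi) (Polynomial.nonempty_support_iff.mpr hf0)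
    have hcj : f.coeff j ≠ 0 := Polynomial.mem_support_iff.mp hjs
    set g : K[X] := f * C (f.coeff j)⁻¹ with hg
    have hgcoeff : ∀ n, g.coeff n = f.coeff n / f.coeff j := by
      intro n; rw [hg, Polynomial.coeff_mul_C, div_eq_mul_inv]
    have hgmem : ∀ n, g.coeff n ∈ A := by
      intro n
      rw [hgcoeff]
      by_cases hn : n ∈ f.support
      · exact hj n hn
      · rw [Polynomial.notMem_support_iff.mp hn, zero_div]; exact A.zero_mem
    have hgsub : (↑g.coeffs : Set K) ⊆ (A.toSubring : Set K) := by
      intro z hz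
      obtain ⟨n, hn, rfl⟩ := Polynomial.mem_coeffs_iff.mp hz
      exact hgmem n
    set G : Polynomial A := g.toSubring A.toSubring hgsub with hG
    have hGmap : G.map A.subtype = g := Polynomial.map_toSubring g A.toSubring hgsub
    have hψG : ψ G = x * algebraMap K L (f.coeff j)⁻¹ := by
      rw [hψev, ← Polynomial.eval₂_map, hGmap, ← Polynomial.aeval_def, hg, map_mul,
        Polynomial.aeval_C, hfx]
    have hGne : G.map res ≠ 0 := by
      intro h0
      have h1 : (G.map res).coeff j = 0 := by rw [h0, Polynomial.coeff_zero]
      rw [Polynomial.coeff_map] at h1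
      have h2 : G.coeff j = 1 := by
        apply Subtype.ext
        rw [show ((G.coeff j : A) : K) = g.coeff j from Polynomial.coeff_toSubring' g A.toSubring hgsub,
          hgcoeff, div_self hcj]
        rfl
      rw [h2, map_one] at h1
      exact one_ne_zero h1
    have hGdeg : (G.map res).degree < (p : ℕ) := by
      apply lt_of_le_of_lt (Polynomial.degree_map_le)
      rw [hG, Polynomial.degree_toSubring]
      calc g.degree ≤ f.degree + (C (f.coeff j)⁻¹).degree := Polynomial.degree_mul_le _ _
      _ ≤ f.degree + 0 := add_le_add le_rfl Polynomial.degree_C_le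
      _ = f.degree := by rw [add_zero]
      _ < (p : ℕ) := hfdeg
    obtain ⟨H, hGH⟩ := hUL G hGne hGdeg
    refine ⟨f.coeff j, G, H, hcj, hGH, ?_, ?_⟩
    · rw [hψG, map_inv₀, ← mul_assoc, mul_comm _ x, mul_assoc,
        mul_inv_cancel₀ (fun h => hcj ((algebraMap K L).injective (by rw [h, map_zero]))), mul_one]
    · intro hcjA
      refine ⟨C ⟨f.coeff j, hcjA⟩ * G, ?_⟩
      rw [map_mul, hψC, hψG, map_inv₀, ← mul_assoc, mul_comm _ x, mul_assoc,
        mul_inv_cancel₀ (fun h => hcj ((algebraMap K L).injective (by rw [h, map_zero]))), mul_one]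
  have hψaeval : ∀ F : Polynomial A, Polynomial.aeval β (F.map A.subtype) = ψ F := by
    intro F
    rw [Polynomial.aeval_def, Polynomial.eval₂_map]
    exact (hψev F).symm
  -- the canonical extension B₀
  set B₀ : ValuationSubring L :=
    { ψ.range with
      mem_or_inv_mem' := by
        intro x
        rcases eq_or_ne x 0 with rfl | hx
        · left; exact ⟨0, map_zero ψ⟩
        rcases hdecomp x hx with ⟨cj, G, H, hcj0, hGH, hxeq, hmem⟩
        rcases A.mem_or_inv_mem cj with hcA | hcA
        · left
          obtain ⟨F, hF⟩ := hmem hcA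
          exact ⟨F, hF⟩
        · right
          refine ⟨C ⟨cj⁻¹, hcA⟩ * H, ?_⟩
          rw [map_mul, hψC, hxeq, mul_inv, map_inv₀]
          congr 1
          exact eq_inv_of_mul_eq_one_left (by rw [mul_comm]; exact hGH) } with hB₀_def
  have hψmemB₀ : ∀ F : Polynomial A, ψ F ∈ B₀ := fun F => ⟨F, rfl⟩
  have hB₀ext : A.IsExtension B₀ := by
    apply ValuationSubring.ext
    intro z
    rw [ValuationSubring.mem_comap]
    constructor
    · rintro ⟨F, hF⟩
      set r : Polynomial A := F %ₘ M' with hr_def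
      have hψr : ψ r = algebraMap K L z := by
        have h9 : ψ r + ψ M' * ψ (F /ₘ M') = ψ F := by
          rw [← map_mul, ← map_add, modByMonic_add_div F M']
        rw [hψev M', hevM', zero_mul, add_zero] at h9
        rw [h9, hF]
      have hrdeg : (r.map A.subtype).degree < (p : ℕ) := by
        apply lt_of_le_of_lt (Polynomial.degree_map_le)
        calc r.degree < M'.degree := degree_modByMonic_lt F hM'monic
        _ = (p : ℕ) := by rw [hM'_def]; exact degree_X_pow_sub_C hp.pos uA
      by_cases hq : (r.map A.subtype - C z) = 0
      · have h7 : ((r.coeff 0 : A) : K) = z := by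
          have h8 := congrArg (fun t : K[X] => t.coeff 0) (sub_eq_zero.mp hq)
          simpa [Polynomial.coeff_map] using h8
        rw [← h7]
        exact (r.coeff 0).2
      · exfalso
        refine hMP _ hq ?_ ?_
        · apply lt_of_le_of_lt (Polynomial.degree_sub_le _ _)
          rw [max_lt_iff]
          refine ⟨hrdeg, lt_of_le_of_lt Polynomial.degree_C_le ?_⟩
          exact_mod_cast Nat.cast_pos.mpr hp.pos
        · rw [map_sub, hψaeval, Polynomial.aeval_C, hψr]
          show algebraMap K L z - algebraMap K L z = 0
          rw [sub_self]
    · intro hz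
      exact ⟨C ⟨z, hz⟩, hψC z hz⟩
  have huniq : ∀ B : ValuationSubring L, A.IsExtension B → B = B₀ := by
    intro B hB
    apply ValuationSubring.ext
    intro x
    constructor
    · intro hxB
      rcases eq_or_ne x 0 with rfl | hx
      · exact B₀.zero_mem
      rcases hdecomp x hx with ⟨cj, G, H, hcj0, hGH, hxeq, hmem⟩
      have hcjB : algebraMap K L cj ∈ B := by
        have h10 : algebraMap K L cj = x * ψ H := by
          rw [hxeq, mul_assoc, hGH, mul_one]
        rw [h10]
        exact mul_mem hxB (hmemB B hB H)
      obtain ⟨F, hF⟩ := hmem ((hAB B hB cj).mpr hcjB)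
      exact ⟨F, hF⟩
    · rintro ⟨F, hF⟩
      rw [← hF]
      exact hmemB B hB F
  constructor
  · exact ⟨B₀, hB₀ext, fun B hB => huniq B hB⟩
  · intro B h
    letI : Algebra (IsLocalRing.ResidueField A) (IsLocalRing.ResidueField B) :=
      (ValuationSubring.resMap h).toAlgebra
    have hβB : β ∈ B := hβmem B h
    letI := ValuationSubring.extHom_isLocalHom h
    refine ⟨IsLocalRing.residue B ⟨β, hβB⟩, ?_, ?_⟩
    · rw [← map_pow]
      have h1 : (⟨β, hβB⟩ : B) ^ p = ValuationSubring.extHom h uA := by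
        apply Subtype.ext
        show β ^ p = _
        rw [hβp]
        rfl
      rw [h1]
      exact (IsLocalRing.ResidueField.map_residue (ValuationSubring.extHom h) uA).symm
    · rw [_root_.eq_top_iff]
      rintro z -
      obtain ⟨b, rfl⟩ := IsLocalRing.residue_surjective z
      have hbB₀ : (b : L) ∈ B₀ := by rw [← huniq B h]; exact b.2
      obtain ⟨F, hF⟩ := hbB₀
      have hb : b = Polynomial.eval₂ (ValuationSubring.extHom h) ⟨β, hβB⟩ F := by
        apply Subtype.ext
        have h11 := Polynomial.hom_eval₂ F (ValuationSubring.extHom h) B.subtype (⟨β, hβB⟩ : B)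
        have hcomp : B.subtype.comp (ValuationSubring.extHom h) = (algebraMap K L).comp A.subtype := rfl
        rw [hcomp] at h11
        show (b : L) = _
        rw [← hF, hψev]
        exact h11.symm
      have hresb : IsLocalRing.residue B b =
          Polynomial.eval₂ ((ValuationSubring.resMap h).comp res) (IsLocalRing.residue B ⟨β, hβB⟩) F := by
        rw [hb, Polynomial.hom_eval₂]
        congr 1
      rw [Algebra.adjoin_singleton_eq_range_aeval]
      refine ⟨F.map res, ?_⟩
      show Polynomial.aeval (IsLocalRing.residue B ⟨β, hβB⟩) (F.map res) = IsLocalRing.residue B b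
      rw [Polynomial.aeval_def, Polynomial.eval₂_map, hresb]
      rfl
end

section
/- Let E be a field with valuation v, let F/E be a function field in one variable, and let w be a residually transcendental extension of v to F. Then the residue field extension Fw/Ev is a function field in one variable (i.e. a finitely generated field extension of transcendence degree one). -/
open IsLocalRing Polynomial

open ValuationSubring IsLocalRing Polynomial



/-! ### Auxiliary lemmas -/

section Aux

open Finset

theorem val_min' {K : Type*} [Field K] (A : ValuationSubring K) (S : Finset K)
    (h0 : ∀ b ∈ S, b ≠ 0) (hne : S.Nonempty) : ∃ a ∈ S, ∀ b ∈ S, b / a ∈ A := by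
  classical
  induction S using Finset.induction_on with
  | empty => exact absurd hne (by simp)
  | @insert c S hc ih =>
    rcases S.eq_empty_or_nonempty with rfl | hS
    · refine ⟨c, Finset.mem_insert_self _ _, fun b hb => ?_⟩
      simp only [Finset.mem_insert, Finset.notMem_empty, or_false] at hb
      rw [hb, div_self (h0 c (Finset.mem_insert_self _ _))]
      exact A.one_mem
    · obtain ⟨a, haS, ha⟩ := ih (fun b hb => h0 b (Finset.mem_insert_of_mem hb)) hS
      have ha0 : a ≠ 0 := h0 a (Finset.mem_insert_of_mem haS)
      rcases A.mem_or_inv_mem (c / a) with hca | hac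
      · refine ⟨a, Finset.mem_insert_of_mem haS, fun b hb => ?_⟩
        rcases Finset.mem_insert.mp hb with rfl | hb
        · exact hca
        · exact ha b hb
      · rw [inv_div] at hac
        refine ⟨c, Finset.mem_insert_self _ _, fun b hb => ?_⟩
        rcases Finset.mem_insert.mp hb with rfl | hb
        · rw [div_self (h0 b (Finset.mem_insert_self _ _))]; exact A.one_mem
        · have hbc : b / c = (b / a) * (a / c) := by field_simp
          rw [hbc]
          exact A.mul_mem _ _ (ha b hb) hac

theorem aeval_mem_IF {E F : Type*} [Field E] [Field F] [Algebra E F] (α : F) (p : E[X]) :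
    (Polynomial.aeval α) p ∈ IntermediateField.adjoin E {α} :=
  IntermediateField.algebra_adjoin_le_adjoin E {α} (Polynomial.aeval_mem_adjoin_singleton E α)

theorem coeff_sum_CX {R : Type*} [Semiring R] (m : Finset ℕ) (a : ℕ → R) (k : ℕ)
    (hk : k ∈ m) : (∑ i ∈ m, C (a i) * X ^ i).coeff k = a k := by
  rw [finset_sum_coeff]
  rw [Finset.sum_eq_single k (fun i _ hik => by
    rw [coeff_C_mul, coeff_X_pow, if_neg (Ne.symm hik), mul_zero]) (fun h => absurd hk h)]
  rw [coeff_C_mul, coeff_X_pow, if_pos rfl, mul_one]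

theorem exchange_transcendental {E F : Type*} [Field E] [Field F] [Algebra E F] {x t : F}
    (ht : Transcendental E t)
    (halg : IsAlgebraic (IntermediateField.adjoin E {x}) t) :
    IsAlgebraic (IntermediateField.adjoin E {t}) x := by
  classical
  obtain ⟨q, hq0, hqt⟩ := halg
  set n := q.natDegree with hn
  have hrs : ∀ i : ℕ, ∃ rs : E[X] × E[X],
      ((q.coeff i : F) = aeval x rs.1 / aeval x rs.2 ∧ aeval x rs.2 ≠ 0) := by
    intro i
    obtain ⟨r, s, hrs⟩ := (IntermediateField.mem_adjoin_simple_iff E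
      ((q.coeff i : F))).mp (q.coeff i).2
    by_cases hs : aeval x s = 0
    · refine ⟨(0, 1), by simp [hrs, hs], by simp⟩
    · exact ⟨(r, s), hrs, hs⟩
  choose rs hval hsne using hrs
  set D : F := ∏ i ∈ range (n + 1), aeval x (rs i).2 with hD
  have hDne : D ≠ 0 := prod_ne_zero_iff.mpr fun i _ => hsne i
  set R : ℕ → E[X] := fun i => (rs i).1 * ∏ j ∈ (range (n + 1)).erase i, (rs j).2 with hR
  have key : ∀ i ∈ range (n + 1), aeval x (R i) = (q.coeff i : F) * D := by
    intro i hi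
    have hD' : D = aeval x (rs i).2 * ∏ j ∈ (range (n + 1)).erase i, aeval x (rs j).2 :=
      (Finset.mul_prod_erase _ _ hi).symm
    rw [hR, map_mul, map_prod, hval i, hD', ← mul_assoc, div_mul_cancel₀ _ (hsne i)]
  have main : ∑ i ∈ range (n + 1), aeval x (R i) * t ^ i = 0 := by
    have h1 : ∑ i ∈ range (n + 1), (q.coeff i : F) * t ^ i = 0 := by
      have := aeval_eq_sum_range (p := q) t
      rw [hqt] at this
      rw [← hn] at this
      have h2 : ∀ i, (q.coeff i) • (t ^ i) = (q.coeff i : F) * t ^ i := fun i =>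
        Algebra.smul_def _ _
      rw [eq_comm, Finset.sum_congr rfl (fun i _ => (h2 i).symm)]
      exact this
    calc ∑ i ∈ range (n + 1), aeval x (R i) * t ^ i
        = ∑ i ∈ range (n + 1), ((q.coeff i : F) * t ^ i) * D := by
          refine Finset.sum_congr rfl fun i hi => ?_
          rw [key i hi]; ring
      _ = (∑ i ∈ range (n + 1), (q.coeff i : F) * t ^ i) * D := by rw [Finset.sum_mul]
      _ = 0 := by rw [h1, zero_mul]
  set N := (range (n + 1)).sup fun i => (R i).natDegree with hN
  have hNlt : ∀ i ∈ range (n + 1), (R i).natDegree < N + 1 := fun i hi =>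
    Nat.lt_succ_of_le (by rw [hN]; exact Finset.le_sup (f := fun i => (R i).natDegree) hi)
  set P : ℕ → E[X] := fun j => ∑ i ∈ range (n + 1), C ((R i).coeff j) * X ^ i with hP
  have haevalP : ∀ j, aeval t (P j)
      = ∑ i ∈ range (n + 1), algebraMap E F ((R i).coeff j) * t ^ i := by
    intro j
    rw [hP, map_sum]
    exact Finset.sum_congr rfl fun i _ => by rw [map_mul, aeval_C, map_pow, aeval_X]
  have swap : ∑ j ∈ range (N + 1), aeval t (P j) * x ^ j = 0 := by
    calc ∑ j ∈ range (N + 1), aeval t (P j) * x ^ j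
        = ∑ j ∈ range (N + 1), ∑ i ∈ range (n + 1),
            (algebraMap E F ((R i).coeff j) * x ^ j) * t ^ i := by
          refine Finset.sum_congr rfl fun j _ => ?_
          rw [haevalP, Finset.sum_mul]
          exact Finset.sum_congr rfl fun i _ => by ring
      _ = ∑ i ∈ range (n + 1), ∑ j ∈ range (N + 1),
            (algebraMap E F ((R i).coeff j) * x ^ j) * t ^ i := Finset.sum_comm
      _ = ∑ i ∈ range (n + 1), aeval x (R i) * t ^ i := by
          refine Finset.sum_congr rfl fun i hi => ?_
          rw [aeval_eq_sum_range' (hNlt i hi) x, Finset.sum_mul]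
          refine Finset.sum_congr rfl fun j _ => ?_
          rw [Algebra.smul_def]
      _ = 0 := main
  have hi0 : q.coeff n ≠ 0 := by
    rw [hn]; exact leadingCoeff_ne_zero.mpr hq0
  have hi0m : n ∈ range (n + 1) := self_mem_range_succ n
  have hRi0 : aeval x (R n) ≠ 0 := by
    rw [key n hi0m]
    exact mul_ne_zero (fun hcc => hi0 (Subtype.coe_injective (by simpa using hcc))) hDne
  have hRne : R n ≠ 0 := fun hh => hRi0 (by rw [hh, map_zero])
  set j₀ := (R n).natDegree with hj₀
  have hRj₀ : (R n).coeff j₀ ≠ 0 := leadingCoeff_ne_zero.mpr hRne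
  have hj₀m : j₀ ∈ range (N + 1) := mem_range.mpr (hNlt n hi0m)
  have hPj₀ : P j₀ ≠ 0 := fun hh => hRj₀ (by
    have h2 := coeff_sum_CX (range (n + 1)) (fun i => (R i).coeff j₀) n hi0m
    change (P j₀).coeff n = (R n).coeff j₀ at h2
    rw [hh] at h2
    simpa using h2.symm)
  have hPt : aeval t (P j₀) ≠ 0 := fun h0 => ht ⟨P j₀, hPj₀, h0⟩
  refine ⟨∑ j ∈ range (N + 1),
    C (⟨aeval t (P j), aeval_mem_IF t (P j)⟩ : IntermediateField.adjoin E {t}) * X ^ j,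
    ?_, ?_⟩
  · intro hh
    apply hPt
    have := coeff_sum_CX (range (N + 1))
      (fun j => (⟨aeval t (P j), aeval_mem_IF t (P j)⟩ :
        IntermediateField.adjoin E {t})) j₀ hj₀m
    rw [hh] at this
    simpa using congrArg Subtype.val this.symm
  · rw [map_sum, ← swap]
    refine Finset.sum_congr rfl fun j _ => ?_
    rw [map_mul, aeval_C, map_pow, aeval_X]
    rfl

theorem fd_adjoin_transcendental {E F : Type*} [Field E] [Field F] [Algebra E F] {x t : F}
    (hfd : FiniteDimensional (IntermediateField.adjoin E {x}) F)
    (ht : Transcendental E t) :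
    FiniteDimensional (IntermediateField.adjoin E {t}) F := by
  classical
  set Ex := IntermediateField.adjoin E {x} with hEx
  set K := IntermediateField.adjoin E {t} with hK
  have halgt : IsAlgebraic Ex t := (IsIntegral.of_finite Ex t).isAlgebraic
  have hax : IsAlgebraic K x := exchange_transcendental ht halgt
  obtain ⟨S, hS⟩ := Module.finite_def.mp hfd
  set gens : Set F := insert x ↑S with hgens
  have htop : IntermediateField.adjoin E (insert t gens) = ⊤ := by
    rw [_root_.eq_top_iff]
    rintro f -
    have hf : f ∈ Submodule.span Ex (↑S : Set F) := by rw [hS]; trivial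
    have hxmem : x ∈ IntermediateField.adjoin E (insert t gens) :=
      IntermediateField.subset_adjoin _ _ (by simp [hgens])
    have hExle : Ex ≤ IntermediateField.adjoin E (insert t gens) :=
      IntermediateField.adjoin_le_iff.mpr (by simpa using hxmem)
    refine Submodule.span_induction ?_ ?_ ?_ ?_ hf
    · intro g hg
      exact IntermediateField.subset_adjoin _ _ (by simp [hgens, hg])
    · exact zero_mem _
    · intro a b _ _ ha hb; exact add_mem ha hb
    · intro c g _ hg
      rw [Algebra.smul_def]
      exact mul_mem (hExle c.2) hg
  have htop2 : IntermediateField.adjoin K gens = ⊤ := by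
    apply IntermediateField.restrictScalars_injective E
    rw [IntermediateField.restrictScalars_top, hK, IntermediateField.adjoin_adjoin_left,
      Set.singleton_union, htop]
  have hxK : IsIntegral K x := hax.isIntegral
  haveI : FiniteDimensional K (IntermediateField.adjoin K {x}) :=
    IntermediateField.adjoin.finiteDimensional hxK
  have hle : Ex ≤ (IntermediateField.adjoin K {x}).restrictScalars E :=
    IntermediateField.adjoin_le_iff.mpr (by
      simpa using IntermediateField.mem_adjoin_simple_self K x)
  set ι : Ex →+* (IntermediateField.adjoin K {x}) :=
    { toFun := fun a => ⟨(a : F), hle a.2⟩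
      map_one' := rfl
      map_mul' := fun a b => rfl
      map_zero' := rfl
      map_add' := fun a b => rfl } with hι
  have hSint : ∀ f ∈ (↑S : Set F), IsIntegral K f := by
    intro f hf
    obtain ⟨p, hpm, hpf⟩ := IsIntegral.of_finite Ex f
    have h2 : IsIntegral (IntermediateField.adjoin K {x}) f := by
      refine ⟨p.map ι, hpm.map ι, ?_⟩
      rw [eval₂_map]
      have hcomp : (algebraMap (IntermediateField.adjoin K {x}) F).comp ι = algebraMap Ex F :=
        RingHom.ext fun a => rfl
      rw [hcomp]
      exact hpf
    haveI : Algebra.IsIntegral K (IntermediateField.adjoin K {x}) :=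
      Algebra.IsIntegral.of_finite _ _
    exact isIntegral_trans f h2
  have hgen : ∀ f ∈ gens, IsIntegral K f := by
    intro f hf
    rcases Set.mem_insert_iff.mp hf with rfl | hf
    · exact hxK
    · exact hSint f hf
  haveI : Finite ↑gens := Set.Finite.to_subtype (S.finite_toSet.insert x)
  haveI : FiniteDimensional K (IntermediateField.adjoin K gens) :=
    IntermediateField.finiteDimensional_adjoin hgen
  rw [htop2] at this
  exact Module.Finite.equiv (IntermediateField.topEquiv (F := K) (E := F)).toLinearEquiv

theorem core_val {E F : Type*} [Field E] [Field F] [Algebra E F]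
    (A : ValuationSubring E) (B : ValuationSubring F) (h : A.IsExtension B)
    [Algebra (ResidueField A) (ResidueField B)]
    (hcomp : algebraMap (ResidueField A) (ResidueField B) = ValuationSubring.resMap h)
    (t : B) (ht : Transcendental (ResidueField A) (residue B t))
    {n : ℕ} (y : Fin n → B)
    (hy : LinearIndependent (IntermediateField.adjoin (ResidueField A) {residue B t})
      fun i => residue B (y i))
    (p : Fin n → E[X])
    (heq : ∑ i, aeval ((t : B) : F) (p i) * ((y i : B) : F) = 0) :
    ∀ i, p i = 0 := by
  classical
  by_contra hcon
  push_neg at hcon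
  obtain ⟨i₁, hi₁⟩ := hcon
  set S : Finset E := Finset.univ.biUnion
    (fun i : Fin n => ((p i).support).image fun j => (p i).coeff j) with hSdef
  have h0 : ∀ b ∈ S, b ≠ 0 := by
    intro b hb
    obtain ⟨i, -, hb⟩ := Finset.mem_biUnion.mp hb
    obtain ⟨j, hj, rfl⟩ := Finset.mem_image.mp hb
    exact mem_support_iff.mp hj
  have hSne : S.Nonempty := by
    refine ⟨(p i₁).coeff (p i₁).natDegree, Finset.mem_biUnion.mpr ⟨i₁, Finset.mem_univ _,
      Finset.mem_image.mpr ⟨(p i₁).natDegree, ?_, rfl⟩⟩⟩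
    exact mem_support_iff.mpr (leadingCoeff_ne_zero.mpr hi₁)
  obtain ⟨a, haS, hdiv⟩ := val_min' A S h0 hSne
  have ha0 : a ≠ 0 := h0 a haS
  obtain ⟨i₀, -, ha⟩ := Finset.mem_biUnion.mp haS
  obtain ⟨j₀, hj₀, haco⟩ := Finset.mem_image.mp ha
  have hcoef : ∀ (i : Fin n) (j : ℕ), (p i).coeff j * a⁻¹ ∈ A := by
    intro i j
    by_cases hc : (p i).coeff j = 0
    · rw [hc, zero_mul]; exact A.zero_mem
    · have hmem : (p i).coeff j ∈ S := Finset.mem_biUnion.mpr ⟨i, Finset.mem_univ _,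
        Finset.mem_image.mpr ⟨j, mem_support_iff.mpr hc, rfl⟩⟩
      have := hdiv _ hmem
      rwa [div_eq_mul_inv] at this
  set p' : Fin n → E[X] := fun i => p i * C a⁻¹ with hp'
  have hmem : ∀ i : Fin n, (↑(p' i).coeffs : Set E) ⊆ ↑A.toSubring := by
    intro i c hc
    simp only [Finset.coe_image, coeffs] at hc
    obtain ⟨j, hj, rfl⟩ := hc
    rw [hp']
    simp only [coeff_mul_C]
    exact hcoef i j
  set q : Fin n → (↥A)[X] := fun i => (p' i).toSubring A.toSubring (hmem i) with hq
  letI : Algebra ↥A ↥B := (ValuationSubring.extHom h).toAlgebra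
  set z : ↥B := ∑ i, aeval t (q i) * y i with hz
  have hzval : (z : F) = 0 := by
    have hco : ∀ i : Fin n, ((aeval t (q i) : B) : F) = aeval ((t : B) : F) (p' i) := by
      intro i
      have h1 : ((aeval t (q i) : B) : F) = eval₂ (B.subtype.comp (algebraMap ↥A ↥B))
          ((t : B) : F) (q i) := by
        rw [aeval_def]; exact hom_eval₂ (q i) (algebraMap ↥A ↥B) B.subtype t
      have h2 : B.subtype.comp (algebraMap ↥A ↥B)
          = (algebraMap E F).comp A.toSubring.subtype :=
        RingHom.ext fun a => rfl
      rw [h1, h2, ← eval₂_map, map_toSubring]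
      rw [aeval_def]
    push_cast [hz]
    rw [Finset.sum_congr rfl (fun i _ => by rw [hco i])]
    have hterm : ∀ i : Fin n, aeval ((t : B) : F) (p' i) * ((y i : B) : F)
        = (aeval ((t : B) : F) (p i) * ((y i : B) : F)) * algebraMap E F a⁻¹ := by
      intro i
      rw [hp', map_mul, aeval_C]; ring
    rw [Finset.sum_congr rfl fun i _ => hterm i, ← Finset.sum_mul, heq, zero_mul]
  have hz0 : z = 0 := Subtype.ext hzval
  haveI := ValuationSubring.extHom_isLocalHom h
  have hres : ∀ i : Fin n, residue B (aeval t (q i))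
      = aeval (residue B t) ((q i).map (residue A)) := by
    intro i
    rw [aeval_def, hom_eval₂, aeval_def, eval₂_map]
    congr 1
    refine RingHom.ext fun b => ?_
    show residue B ((ValuationSubring.extHom h) b)
      = algebraMap (ResidueField A) (ResidueField B) (residue A b)
    rw [hcomp]
    exact (ResidueField.map_residue _ _).symm
  have hsum0 : ∑ i, aeval (residue B t) ((q i).map (residue A)) * residue B (y i) = 0 := by
    have hres0 := congrArg (residue B) hz0
    rw [hz, map_sum, map_zero] at hres0
    rw [← hres0]
    exact Finset.sum_congr rfl fun i _ => by rw [map_mul, hres i]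
  set γ : Fin n → IntermediateField.adjoin (ResidueField A) {residue B t} :=
    fun i => ⟨aeval (residue B t) ((q i).map (residue A)), aeval_mem_IF _ _⟩ with hγ
  have hγ0 : ∀ i, γ i = 0 := by
    refine Fintype.linearIndependent_iff.mp hy γ ?_
    rw [← hsum0]
    exact Finset.sum_congr rfl fun i _ => by
      rw [Algebra.smul_def]; rfl
  have hγi₀ : (q i₀).map (residue A) ≠ 0 := by
    intro hmap
    have h1 : ((q i₀).map (residue A)).coeff j₀ = residue A ((q i₀).coeff j₀) := coeff_map _ _
    have h2 : (q i₀).coeff j₀ = 1 := by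
      have h3 : ((q i₀).coeff j₀ : E) = 1 := by
        rw [hq, coeff_toSubring', hp', coeff_mul_C, haco, mul_inv_cancel₀ ha0]
      exact Subtype.coe_injective h3
    rw [hmap, coeff_zero, h2, map_one] at h1
    exact one_ne_zero h1.symm
  have hne : aeval (residue B t) ((q i₀).map (residue A)) ≠ 0 :=
    fun h0 => ht ⟨(q i₀).map (residue A), hγi₀, h0⟩
  exact hne (Subtype.ext_iff.mp (hγ0 i₀))

end Aux

section Aux2

open Finset ValuationSubring

set_option maxHeartbeats 1000000 in
set_option synthInstance.maxHeartbeats 400000 in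
theorem trans_lift {E F : Type*} [Field E] [Field F] [Algebra E F]
    (A : ValuationSubring E) (B : ValuationSubring F) (h : A.IsExtension B)
    [Algebra (ResidueField A) (ResidueField B)]
    (hcomp : algebraMap (ResidueField A) (ResidueField B) = ValuationSubring.resMap h)
    (t : B) (ht : Transcendental (ResidueField A) (residue B t)) :
    Transcendental E ((t : B) : F) := by
  rintro ⟨P, hP0, hPt⟩
  have hy : LinearIndependent (IntermediateField.adjoin (ResidueField A) {residue B t})
      fun _ : Fin 1 => residue B ((fun _ : Fin 1 => (1 : B)) 0) := by
    refine linearIndependent_unique_iff.mpr ?_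
    simp only [map_one]
    exact one_ne_zero
  have := core_val A B h hcomp t ht (fun _ : Fin 1 => (1 : B)) hy (fun _ => P)
    (by simp [hPt])
  exact hP0 (this 0)

set_option maxHeartbeats 1000000 in
set_option synthInstance.maxHeartbeats 400000 in
theorem li_lift {E F : Type*} [Field E] [Field F] [Algebra E F]
    (A : ValuationSubring E) (B : ValuationSubring F) (h : A.IsExtension B)
    [Algebra (ResidueField A) (ResidueField B)]
    (hcomp : algebraMap (ResidueField A) (ResidueField B) = ValuationSubring.resMap h)
    (t : B) (ht : Transcendental (ResidueField A) (residue B t))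
    {n : ℕ} (y : Fin n → B)
    (hy : LinearIndependent (IntermediateField.adjoin (ResidueField A) {residue B t})
      fun i => residue B (y i)) :
    LinearIndependent (IntermediateField.adjoin E {((t : B) : F)})
      fun i => ((y i : B) : F) := by
  classical
  set tF : F := ((t : B) : F) with htF
  rw [Fintype.linearIndependent_iff]
  intro c hc
  have hrs : ∀ i : Fin n, ∃ rs : E[X] × E[X],
      ((c i : F) = aeval tF rs.1 / aeval tF rs.2 ∧ aeval tF rs.2 ≠ 0) := by
    intro i
    obtain ⟨r, s, hrs⟩ := (IntermediateField.mem_adjoin_simple_iff E ((c i : F))).mp (c i).2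
    by_cases hs : aeval tF s = 0
    · exact ⟨(0, 1), by simp [hrs, hs], by simp⟩
    · exact ⟨(r, s), hrs, hs⟩
  choose rs hval hsne using hrs
  set D : F := ∏ j : Fin n, aeval tF (rs j).2 with hD
  have hDne : D ≠ 0 := prod_ne_zero_iff.mpr fun j _ => hsne j
  set P : Fin n → E[X] := fun i => (rs i).1 * ∏ j ∈ univ.erase i, (rs j).2 with hP
  have key : ∀ i : Fin n, aeval tF (P i) = (c i : F) * D := by
    intro i
    have hD' : D = aeval tF (rs i).2 * ∏ j ∈ univ.erase i, aeval tF (rs j).2 :=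
      (Finset.mul_prod_erase _ _ (mem_univ i)).symm
    rw [hP, map_mul, map_prod, hval i, hD', ← mul_assoc, div_mul_cancel₀ _ (hsne i)]
  have hsum : ∑ i, aeval tF (P i) * ((y i : B) : F) = 0 := by
    calc ∑ i, aeval tF (P i) * ((y i : B) : F)
        = ∑ i, ((c i : F) * ((y i : B) : F)) * D := by
          exact Finset.sum_congr rfl fun i _ => by rw [key i]; ring
      _ = (∑ i, (c i : F) * ((y i : B) : F)) * D := by rw [Finset.sum_mul]
      _ = 0 := by
          have hc' : ∑ i, (c i : F) * ((y i : B) : F) = 0 := by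
            rw [← hc]
            exact Finset.sum_congr rfl fun i _ => by rw [Algebra.smul_def]; rfl
          rw [hc', zero_mul]
  have hall := core_val A B h hcomp t ht y hy P hsum
  intro i
  have h1 : (c i : F) * D = 0 := by
    rw [← key i, hall i, map_zero]
  have h2 : (c i : F) = 0 := by
    rcases mul_eq_zero.mp h1 with h2 | h2
    · exact h2
    · exact absurd h2 hDne
  exact Subtype.ext (by simpa using h2)

end Aux2

set_option maxHeartbeats 1000000 in
set_option synthInstance.maxHeartbeats 1000000 in
/-- a residually transcendental extension of a valuation to a function
field in one variable has residue field extension a function field in one variable. -/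
theorem stmt_8 {E F : Type*} [Field E] [Field F] [Algebra E F]
    (hFF : IsFunctionFieldOneVar E F)
    (A : ValuationSubring E) (B : ValuationSubring F) (h : A.IsExtension B)
    (hrt : letI := (ValuationSubring.resMap h).toAlgebra
      ¬ Algebra.IsAlgebraic (ResidueField A) (ResidueField B)) :
    letI := (ValuationSubring.resMap h).toAlgebra
    IsFunctionFieldOneVar (ResidueField A) (ResidueField B) := by
  letI : Algebra (ResidueField A) (ResidueField B) := (ValuationSubring.resMap h).toAlgebra
  have hcomp : algebraMap (ResidueField A) (ResidueField B) = ValuationSubring.resMap h := rfl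
  obtain ⟨x, hx, hfdx⟩ := hFF
  have hex : ∃ τ : ResidueField B, Transcendental (ResidueField A) τ := by
    by_contra hh
    push_neg at hh
    exact hrt ⟨fun τ => not_not.mp (hh τ)⟩
  obtain ⟨τ, hτ⟩ := hex
  obtain ⟨t, rfl⟩ := residue_surjective τ
  refine ⟨residue B t, hτ, ?_⟩
  have htF : Transcendental E ((t : B) : F) := trans_lift A B h hcomp t hτ
  haveI hfd2 : FiniteDimensional (IntermediateField.adjoin E {((t : B) : F)}) F :=
    fd_adjoin_transcendental hfdx htF
  set m := Module.finrank (IntermediateField.adjoin E {((t : B) : F)}) F with hm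
  have hrankle : Module.rank (IntermediateField.adjoin (ResidueField A) {residue B t})
      (ResidueField B) ≤ (m : Cardinal) := by
    refine rank_le fun s hs => ?_
    have hsur := residue_surjective (R := ↥B)
    set f : ResidueField B → ↥B := Function.surjInv hsur with hf
    set e := s.equivFin with he
    set yy : Fin s.card → ↥B := fun i => f ((e.symm i : ResidueField B)) with hyy
    have hyres : (fun i => residue B (yy i))
        = fun i : Fin s.card => ((e.symm i : ResidueField B)) :=
      funext fun i => Function.surjInv_eq hsur _
    have hli : LinearIndependent (IntermediateField.adjoin (ResidueField A) {residue B t})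
        fun i : Fin s.card => residue B (yy i) := by
      rw [hyres]
      exact hs.comp e.symm e.symm.injective
    have hcard := (li_lift A B h hcomp t hτ yy hli).fintype_card_le_finrank
    simpa using hcard
  have hrank : Module.rank (IntermediateField.adjoin (ResidueField A) {residue B t})
      (ResidueField B) < Cardinal.aleph0 :=
    lt_of_le_of_lt hrankle (Cardinal.nat_lt_aleph0 m)
  haveI hnoe : IsNoetherian (IntermediateField.adjoin (ResidueField A) {residue B t})
      (ResidueField B) := IsNoetherian.iff_rank_lt_aleph0.mpr hrank
  exact Module.finite_def.mpr (IsNoetherian.noetherian ⊤)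
end

section
/- Let E be a field of characteristic ≠ 2 and a, b ∈ E^×. The plane affine conic C_{a,b}: Y² = aX² + b has an E-rational point if and only if the function field E(X)[√(aX²+b)] is a rational function field over E. -/
open IsLocalRing Polynomial

open ValuationSubring IsLocalRing Polynomial



section Aux

open Polynomial

section PointLemmas
variable {E : Type*} [Field E] {a b : E}

lemma pt_of_sq_a (h2 : (2:E) ≠ 0) {c : E} (hc0 : c ≠ 0) :
    ∃ x₀ y₀ : E, y₀ ^ 2 = c^2 * x₀ ^ 2 + b :=
  ⟨(b - 1)/(2*c), (1+b)/2, by field_simp; ring⟩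

lemma pt_of_sq_b {c : E} (hc : c ^ 2 = b) :
    ∃ x₀ y₀ : E, y₀ ^ 2 = a * x₀ ^ 2 + b :=
  ⟨0, c, by simp [hc]⟩

lemma pt_of_sq_nab (ha : a ≠ 0) {c : E} (hc : c ^ 2 = -(a*b)) :
    ∃ x₀ y₀ : E, y₀ ^ 2 = a * x₀ ^ 2 + b :=
  ⟨c/a, 0, by field_simp; linear_combination -hc⟩

lemma point_of_polys (h2 : (2:E) ≠ 0) (ha : a ≠ 0) (hb : b ≠ 0)
    {p q r : Polynomial E} (hp : p ≠ 0) (hq : q ≠ 0) (hr : r ≠ 0)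
    (heq : q ^ 2 = Polynomial.C a * p ^ 2 + Polynomial.C b * r ^ 2) :
    ∃ x₀ y₀ : E, y₀ ^ 2 = a * x₀ ^ 2 + b := by
  set dp := p.natDegree
  set dr := r.natDegree
  set α := p.leadingCoeff with hα
  set β := r.leadingCoeff with hβ
  set γ := q.leadingCoeff with hγ
  have hα0 : α ≠ 0 := leadingCoeff_ne_zero.mpr hp
  have hβ0 : β ≠ 0 := leadingCoeff_ne_zero.mpr hr
  have hγ0 : γ ≠ 0 := leadingCoeff_ne_zero.mpr hq
  have hpp : (p^2).coeff (dp + dp) = α^2 := by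
    rw [pow_two, pow_two, coeff_mul_degree_add_degree]
  have hrr : (r^2).coeff (dr + dr) = β^2 := by
    rw [pow_two, pow_two, coeff_mul_degree_add_degree]
  have hqlc : (q^2).leadingCoeff = γ^2 := leadingCoeff_pow q 2
  have hpdeg : (p^2).natDegree ≤ dp + dp := by
    exact (natDegree_pow_le (p := p) (n := 2)).trans (le_of_eq (two_mul _))
  have hrdeg : (r^2).natDegree ≤ dr + dr := by
    exact (natDegree_pow_le (p := r) (n := 2)).trans (le_of_eq (two_mul _))
  rcases lt_trichotomy dp dr with h | h | h
  · -- b is a square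
    have h1 : (q^2).coeff (dr + dr) = b * β^2 := by
      rw [heq, coeff_add, coeff_C_mul, coeff_C_mul, hrr,
        coeff_eq_zero_of_natDegree_lt (lt_of_le_of_lt hpdeg (by omega)), mul_zero, zero_add]
    have hne : b * β^2 ≠ 0 := mul_ne_zero hb (pow_ne_zero _ hβ0)
    have hdeg : (q^2).natDegree = dr + dr := by
      refine le_antisymm ?_ (le_natDegree_of_ne_zero (h1 ▸ hne))
      rw [heq]
      refine (natDegree_add_le _ _).trans (max_le ?_ ?_)
      · exact (natDegree_C_mul_le _ _).trans (hpdeg.trans (by omega))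
      · exact (natDegree_C_mul_le _ _).trans hrdeg
    have hg : γ^2 = b * β^2 := by
      rw [← hqlc, leadingCoeff, hdeg, h1]
    refine pt_of_sq_b (a := a) (c := γ/β) ?_
    field_simp
    linear_combination hg
  · -- dp = dr
    by_cases hs : a * α^2 + b * β^2 = 0
    · refine pt_of_sq_nab ha (c := a*α/β) ?_
      field_simp
      linear_combination hs
    · have h1 : (q^2).coeff (dp + dp) = a * α^2 + b * β^2 := by
        rw [heq, coeff_add, coeff_C_mul, coeff_C_mul, hpp, h, hrr]
      have hdeg : (q^2).natDegree = dp + dp := by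
        refine le_antisymm ?_ (le_natDegree_of_ne_zero (h1 ▸ hs))
        rw [heq]
        refine (natDegree_add_le _ _).trans (max_le ?_ ?_)
        · exact (natDegree_C_mul_le _ _).trans hpdeg
        · exact (natDegree_C_mul_le _ _).trans (hrdeg.trans (by omega))
      have hg : γ^2 = a * α^2 + b * β^2 := by
        rw [← hqlc, leadingCoeff, hdeg, h1]
      exact ⟨α/β, γ/β, by field_simp; linear_combination hg⟩
  · -- a is a square
    have h1 : (q^2).coeff (dp + dp) = a * α^2 := by
      rw [heq, coeff_add, coeff_C_mul, coeff_C_mul, hpp,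
        coeff_eq_zero_of_natDegree_lt (lt_of_le_of_lt hrdeg (by omega)), mul_zero, add_zero]
    have hne : a * α^2 ≠ 0 := mul_ne_zero ha (pow_ne_zero _ hα0)
    have hdeg : (q^2).natDegree = dp + dp := by
      refine le_antisymm ?_ (le_natDegree_of_ne_zero (h1 ▸ hne))
      rw [heq]
      refine (natDegree_add_le _ _).trans (max_le ?_ ?_)
      · exact (natDegree_C_mul_le _ _).trans hpdeg
      · exact (natDegree_C_mul_le _ _).trans (hrdeg.trans (by omega))
    have hg : γ^2 = a * α^2 := by
      rw [← hqlc, leadingCoeff, hdeg, h1]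
    have hca : (γ/α)^2 = a := by field_simp; linear_combination hg
    have := pt_of_sq_a (b := b) h2 (c := γ/α) (div_ne_zero hγ0 hα0)
    simpa [hca] using this

end PointLemmas

section Mach
variable {E : Type*} [Field E] {F : Type*} [Field F] [Algebra (RatFunc E) F] [Algebra E F]
    [IsScalarTower E (RatFunc E) F]

lemma emb_algebraMap_poly (p : Polynomial E) :
    algebraMap (RatFunc E) F (algebraMap (Polynomial E) (RatFunc E) p)
      = aeval (algebraMap (RatFunc E) F RatFunc.X) p := by
  have h : (algebraMap (RatFunc E) F).comp (algebraMap (Polynomial E) (RatFunc E))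
      = (aeval (algebraMap (RatFunc E) F RatFunc.X) : Polynomial E →ₐ[E] F).toRingHom := by
    refine Polynomial.ringHom_ext (fun e => ?_) ?_
    · rw [RingHom.comp_apply, RatFunc.algebraMap_C, AlgHom.toRingHom_eq_coe,
        RingHom.coe_coe, aeval_C, ← RatFunc.algebraMap_eq_C,
        ← IsScalarTower.algebraMap_apply]
    · rw [RingHom.comp_apply, RatFunc.algebraMap_X, AlgHom.toRingHom_eq_coe,
        RingHom.coe_coe, aeval_X]
  exact RingHom.congr_fun h p

lemma x_transcendental : Transcendental E (algebraMap (RatFunc E) F RatFunc.X) := by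
  rw [transcendental_iff_injective]
  intro p q hpq
  have h1 : ∀ r : Polynomial E, aeval (algebraMap (RatFunc E) F RatFunc.X) r
      = algebraMap (RatFunc E) F (algebraMap (Polynomial E) (RatFunc E) r) :=
    fun r => (emb_algebraMap_poly r).symm
  rw [h1, h1] at hpq
  exact IsFractionRing.injective (Polynomial E) (RatFunc E)
    ((algebraMap (RatFunc E) F).injective hpq)

omit [Algebra (RatFunc E) F] [IsScalarTower E (RatFunc E) F] in
lemma trans_of_mem {t x : F} (hx : Transcendental E x)
    (hmem : x ∈ IntermediateField.adjoin E {t}) : Transcendental E t := by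
  intro ht
  apply hx
  have : FiniteDimensional E (IntermediateField.adjoin E {t}) :=
    IntermediateField.adjoin.finiteDimensional ht.isIntegral
  have h2 : IsIntegral E (⟨x, hmem⟩ : IntermediateField.adjoin E {t}) :=
    IsIntegral.of_finite E _
  exact (h2.map (IntermediateField.adjoin E {t}).val).isAlgebraic

/-- If `x := emb X` and `y` both lie in `E(t)`, then `F = E(t)` is rational. -/
lemma isRationalFF_of_gen {y : F} (hgen : Algebra.adjoin (RatFunc E) {y} = ⊤) (t : F)
    (hxm : algebraMap (RatFunc E) F RatFunc.X ∈ IntermediateField.adjoin E {t})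
    (hym : y ∈ IntermediateField.adjoin E {t}) : IsRationalFF E F := by
  set K := IntermediateField.adjoin E {t} with hK
  set x : F := algebraMap (RatFunc E) F RatFunc.X with hx
  refine ⟨t, trans_of_mem x_transcendental hxm, ?_⟩
  have haevmem : ∀ p : Polynomial E, aeval x p ∈ K := by
    intro p
    have h1 : aeval x p ∈ Algebra.adjoin E {x} := by
      rw [Algebra.adjoin_singleton_eq_range_aeval]
      exact ⟨p, rfl⟩
    exact Algebra.adjoin_le (Set.singleton_subset_iff.mpr hxm) h1
  have hrange : ∀ f : RatFunc E, algebraMap (RatFunc E) F f ∈ K := by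
    intro f
    induction f using RatFunc.induction_on with
    | f p q hq =>
      rw [map_div₀, emb_algebraMap_poly, emb_algebraMap_poly]
      exact K.div_mem (haevmem p) (haevmem q)
  rw [_root_.eq_top_iff]
  intro z hzt
  clear hzt
  have hz : z ∈ Algebra.adjoin (RatFunc E) {y} := hgen.symm ▸ Algebra.mem_top
  induction hz using Algebra.adjoin_induction with
  | mem w hw => exact (Set.mem_singleton_iff.mp hw) ▸ hym
  | algebraMap f => exact hrange f
  | add u v _ _ hu hv => exact K.add_mem hu hv
  | mul u v _ _ hu hv => exact K.mul_mem hu hv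

end Mach

end Aux

/-- the conic `Y² = aX² + b` has an `E`-rational point iff its function
field `E(X)[√(aX²+b)]` is a rational function field over `E`. -/
theorem stmt_10 {E : Type u} [Field E] (h2 : (2 : E) ≠ 0)
    (a b : E) (ha : a ≠ 0) (hb : b ≠ 0)
    {F : Type v} [Field F] [Algebra (RatFunc E) F] [Algebra E F]
    [IsScalarTower E (RatFunc E) F]
    (y : F)
    (hy : y ^ 2 = algebraMap (RatFunc E) F
      (RatFunc.C a * RatFunc.X ^ 2 + RatFunc.C b))
    (hgen : Algebra.adjoin (RatFunc E) {y} = ⊤) :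
    (∃ x₀ y₀ : E, y₀ ^ 2 = a * x₀ ^ 2 + b) ↔ IsRationalFF E F := by
  classical
  have hinj : Function.Injective (algebraMap (RatFunc E) F) :=
    (algebraMap (RatFunc E) F).injective
  have hEinj : Function.Injective (algebraMap E F) := (algebraMap E F).injective
  have hCa : algebraMap (RatFunc E) F (RatFunc.C a) = algebraMap E F a := by
    rw [← RatFunc.algebraMap_eq_C, ← IsScalarTower.algebraMap_apply]
  have hCb : algebraMap (RatFunc E) F (RatFunc.C b) = algebraMap E F b := by
    rw [← RatFunc.algebraMap_eq_C, ← IsScalarTower.algebraMap_apply]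
  have hyF : y ^ 2 = algebraMap E F a * (algebraMap (RatFunc E) F RatFunc.X) ^ 2
      + algebraMap E F b := by
    rw [hy, map_add, map_mul, map_pow, hCa, hCb]
  have hA0 : algebraMap E F a ≠ 0 :=
    fun h => ha (hEinj (by rw [map_zero]; exact h))
  have hB0 : algebraMap E F b ≠ 0 :=
    fun h => hb (hEinj (by rw [map_zero]; exact h))
  have h2E : algebraMap E F 2 ≠ 0 :=
    fun h => h2 (hEinj (by rw [map_zero]; exact h))
  constructor
  · rintro ⟨x₀, y₀, hpt⟩
    have hptF : (algebraMap E F y₀) ^ 2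
        = algebraMap E F a * (algebraMap E F x₀) ^ 2 + algebraMap E F b := by
      rw [← map_pow, ← map_pow, ← map_mul, ← map_add]
      exact congrArg _ hpt
    by_cases hsq : ∃ c : E, c ^ 2 = a
    · -- a is a square: use u = y - c x as generator
      obtain ⟨c, hc⟩ := hsq
      have hc0 : c ≠ 0 := fun h => ha (by rw [← hc, h]; ring)
      have hcF2 : (algebraMap E F c) ^ 2 = algebraMap E F a := by rw [← map_pow, hc]
      set u : F := y - algebraMap E F c * algebraMap (RatFunc E) F RatFunc.X with hu
      have huv : u * (y + algebraMap E F c * algebraMap (RatFunc E) F RatFunc.X)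
          = algebraMap E F b := by
        rw [hu]
        linear_combination hyF - (algebraMap (RatFunc E) F RatFunc.X)^2 * hcF2
      have hu0 : u ≠ 0 := fun h => hB0 (by rw [← huv, h, zero_mul])
      have hyc : y + algebraMap E F c * algebraMap (RatFunc E) F RatFunc.X
          = algebraMap E F b / u := by
        rw [eq_div_iff hu0]
        linear_combination huv
      set K := IntermediateField.adjoin E {u} with hK
      have humem : u ∈ K := IntermediateField.mem_adjoin_simple_self E u
      have h2c : algebraMap E F (2*c) ≠ 0 :=
        fun h => (mul_ne_zero h2 hc0) (hEinj (by rw [map_zero]; exact h))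
      have hxeq : algebraMap (RatFunc E) F RatFunc.X
          = (algebraMap E F b / u - u) / algebraMap E F (2*c) := by
        rw [eq_div_iff h2c, ← hyc, map_mul, map_ofNat, hu]
        ring
      have hxm : algebraMap (RatFunc E) F RatFunc.X ∈ K := by
        rw [hxeq]
        exact K.div_mem (K.sub_mem (K.div_mem (K.algebraMap_mem b) humem) humem)
          (K.algebraMap_mem _)
      have hyeq : y = (algebraMap E F b / u + u) / algebraMap E F 2 := by
        rw [eq_div_iff h2E, ← hyc, map_ofNat, hu]
        ring
      have hym : y ∈ K := by
        rw [hyeq]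
        exact K.div_mem (K.add_mem (K.div_mem (K.algebraMap_mem b) humem) humem)
          (K.algebraMap_mem _)
      exact isRationalFF_of_gen hgen u hxm hym
    · -- a is not a square: slope parametrization
      set x : F := algebraMap (RatFunc E) F RatFunc.X with hxdef
      have hd : x - algebraMap E F x₀ ≠ 0 := by
        refine sub_ne_zero.mpr (fun h => x_transcendental (E := E) (F := F) ?_)
        rw [← hxdef, h]
        exact isAlgebraic_algebraMap x₀
      set t : F := (y - algebraMap E F y₀) / (x - algebraMap E F x₀) with htdef
      have ht : t * (x - algebraMap E F x₀) = y - algebraMap E F y₀ :=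
        div_mul_cancel₀ _ hd
      have hyy : y = algebraMap E F y₀ + t * (x - algebraMap E F x₀) := by
        rw [ht]; ring
      clear_value t
      have hkey : (x - algebraMap E F x₀) *
          (x * (t^2 - algebraMap E F a) -
            (t^2 * algebraMap E F x₀ - 2 * t * algebraMap E F y₀
              + algebraMap E F a * algebraMap E F x₀)) = 0 := by
        linear_combination hyF - hptF
          - (y + algebraMap E F y₀ + t * (x - algebraMap E F x₀)) * hyy
      have h2F : (2:F) ≠ 0 := by
        intro h
        exact h2E (by rw [map_ofNat]; exact h)
      have htA : t^2 - algebraMap E F a ≠ 0 := by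
        intro hA2
        have h0 : x * (t^2 - algebraMap E F a) -
            (t^2 * algebraMap E F x₀ - 2 * t * algebraMap E F y₀
              + algebraMap E F a * algebraMap E F x₀) = 0 :=
          (mul_eq_zero.mp hkey).resolve_left hd
        have ht2 : t^2 = algebraMap E F a := sub_eq_zero.mp hA2
        rw [ht2] at h0
        have h00 : t * algebraMap E F y₀ = algebraMap E F a * algebraMap E F x₀ := by
          apply mul_left_cancel₀ h2F
          linear_combination h0
        by_cases hy₀ : y₀ = 0
        · rw [hy₀, map_zero, mul_zero] at h00
          have hxE : algebraMap E F x₀ = 0 :=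
            (mul_eq_zero.mp h00.symm).resolve_left hA0
          have hx₀ : x₀ = 0 := hEinj (by rw [map_zero]; exact hxE)
          rw [hy₀, hx₀] at hpt
          apply hb
          linear_combination -hpt
        · have hyE0 : algebraMap E F y₀ ≠ 0 :=
            fun h => hy₀ (hEinj (by rw [map_zero]; exact h))
          have htval : t = algebraMap E F (a * x₀ / y₀) := by
            rw [map_div₀, map_mul, eq_div_iff hyE0]
            exact h00
          apply hsq
          refine ⟨a * x₀ / y₀, hEinj ?_⟩
          rw [map_pow, ← htval, ht2]
      have h0 : x * (t^2 - algebraMap E F a)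
          = t^2 * algebraMap E F x₀ - 2 * t * algebraMap E F y₀
              + algebraMap E F a * algebraMap E F x₀ :=
        sub_eq_zero.mp ((mul_eq_zero.mp hkey).resolve_left hd)
      set K := IntermediateField.adjoin E {t} with hK
      have htmem : t ∈ K := IntermediateField.mem_adjoin_simple_self E t
      have hxeq : x = (t^2 * algebraMap E F x₀ - t * algebraMap E F (2 * y₀)
          + algebraMap E F (a * x₀)) / (t^2 - algebraMap E F a) := by
        rw [eq_div_iff htA, map_mul, map_mul, map_ofNat]
        linear_combination h0
      have hxm : x ∈ K := by
        rw [hxeq]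
        refine K.div_mem (K.add_mem (K.sub_mem ?_ ?_) (K.algebraMap_mem _))
          (K.sub_mem (pow_mem htmem 2) (K.algebraMap_mem _))
        · exact K.mul_mem (pow_mem htmem 2) (K.algebraMap_mem _)
        · exact K.mul_mem htmem (K.algebraMap_mem _)
      have hym : y ∈ K := by
        rw [hyy]
        exact K.add_mem (K.algebraMap_mem _)
          (K.mul_mem htmem (K.sub_mem hxm (K.algebraMap_mem _)))
      exact isRationalFF_of_gen hgen t (hxdef ▸ hxm) hym
  · rintro ⟨t, htr, htop⟩
    set x : F := algebraMap (RatFunc E) F RatFunc.X with hxdef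
    have hx0 : x ≠ 0 :=
      fun h => RatFunc.X_ne_zero (hinj (by rw [map_zero]; exact h))
    have hpoly0 : (Polynomial.C a * Polynomial.X ^ 2 + Polynomial.C b : Polynomial E) ≠ 0 :=
      fun h => ha (by simpa using congrArg (fun p => Polynomial.coeff p 2) h)
    have hRF : (RatFunc.C a * RatFunc.X ^ 2 + RatFunc.C b : RatFunc E) ≠ 0 := by
      have hmap : algebraMap (Polynomial E) (RatFunc E)
          (Polynomial.C a * Polynomial.X ^ 2 + Polynomial.C b)
          = RatFunc.C a * RatFunc.X ^ 2 + RatFunc.C b := by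
        simp [map_add, map_mul, map_pow, RatFunc.algebraMap_C, RatFunc.algebraMap_X]
      rw [← hmap]
      exact RatFunc.algebraMap_ne_zero hpoly0
    have hy0 : y ≠ 0 := by
      intro h
      rw [h, zero_pow (two_ne_zero)] at hy
      exact hRF (hinj (by rw [map_zero]; exact hy.symm))
    have hxm : x ∈ IntermediateField.adjoin E {t} :=
      htop.symm ▸ IntermediateField.mem_top
    have hym : y ∈ IntermediateField.adjoin E {t} :=
      htop.symm ▸ IntermediateField.mem_top
    obtain ⟨P₁, Q₁, hX⟩ := (IntermediateField.mem_adjoin_simple_iff E x).mp hxm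
    obtain ⟨P₂, Q₂, hY⟩ := (IntermediateField.mem_adjoin_simple_iff E y).mp hym
    have hQ₁ : aeval t Q₁ ≠ 0 := fun h => hx0 (by rw [hX, h, div_zero])
    have hP₁ : aeval t P₁ ≠ 0 := fun h => hx0 (by rw [hX, h, zero_div])
    have hQ₂ : aeval t Q₂ ≠ 0 := fun h => hy0 (by rw [hY, h, div_zero])
    have hP₂ : aeval t P₂ ≠ 0 := fun h => hy0 (by rw [hY, h, zero_div])
    have hu₁ : aeval t P₁ = x * aeval t Q₁ := by
      rw [hX, div_mul_cancel₀ _ hQ₁]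
    have hu₂ : aeval t P₂ = y * aeval t Q₂ := by
      rw [hY, div_mul_cancel₀ _ hQ₂]
    have key : (aeval t P₂ * aeval t Q₁)^2
        = algebraMap E F a * (aeval t P₁ * aeval t Q₂)^2
          + algebraMap E F b * (aeval t Q₁ * aeval t Q₂)^2 := by
      rw [hu₁, hu₂]
      linear_combination (aeval t Q₁ * aeval t Q₂)^2 * hyF
    have key2 : aeval t ((P₂ * Q₁)^2)
        = aeval t (Polynomial.C a * (P₁ * Q₂)^2 + Polynomial.C b * (Q₁ * Q₂)^2) := by
      simpa only [map_add, map_mul, map_pow, aeval_C] using key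
    have hpoly : (P₂ * Q₁)^2
        = Polynomial.C a * (P₁ * Q₂)^2 + Polynomial.C b * (Q₁ * Q₂)^2 :=
      (transcendental_iff_injective.mp htr) key2
    exact point_of_polys h2 ha hb
      (mul_ne_zero (fun h => hP₁ (by rw [h, map_zero])) (fun h => hQ₂ (by rw [h, map_zero])))
      (mul_ne_zero (fun h => hP₂ (by rw [h, map_zero])) (fun h => hQ₁ (by rw [h, map_zero])))
      (mul_ne_zero (fun h => hQ₁ (by rw [h, map_zero])) (fun h => hQ₂ (by rw [h, map_zero])))
      hpoly
end

section
/- Let E be a field with valuation v, v(6)=0, and a, b ∈ E with Δ_{a,b} = 4a³+27b² ≠ 0. Let F = E(X)[√(X³+aX+b)] and let w be a residually transcendental extension of v to F with w(Z) = 0 where Z = X³/(aX+b). Then v(a³) = v(b²) if and only if w(X³) = w(aX) = w(b). In particular, if a, b ∈ O_v^× then w(X) = 0. -/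
open IsLocalRing Polynomial

open ValuationSubring IsLocalRing Polynomial



section AuxLemmas

variable {K : Type*} [Field K]

lemma aux_isUnitVal_iff (B : ValuationSubring K) (x : K) :
    B.IsUnitVal x ↔ B.valuation x = 1 := by
  constructor
  · rintro ⟨hx, h1, h2⟩
    refine le_antisymm ((B.valuation_le_one_iff x).mpr h1) ?_
    have h3 := (B.valuation_le_one_iff x⁻¹).mpr h2
    rw [map_inv₀] at h3
    have hx0 : B.valuation x ≠ 0 := by simpa [Valuation.ne_zero_iff] using hx
    rw [inv_le_one₀ (lt_of_le_of_ne zero_le' (Ne.symm hx0))] at h3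
    exact h3
  · intro hx
    have hx0 : x ≠ 0 := by
      intro h0; rw [h0, map_zero] at hx; exact zero_ne_one hx
    refine ⟨hx0, (B.valuation_le_one_iff x).mp hx.le, (B.valuation_le_one_iff x⁻¹).mp ?_⟩
    rw [map_inv₀, hx, inv_one]

lemma aux_vle_iff (B : ValuationSubring K) (x y : K) :
    B.VLE x y ↔ B.valuation y ≤ B.valuation x := by
  rcases eq_or_ne x 0 with rfl | hx
  · constructor
    · rintro ⟨h, -⟩; simp [h rfl]
    · intro h
      have hy : y = 0 := by
        rw [map_zero, le_zero_iff, Valuation.zero_iff] at h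
        exact h
      exact ⟨fun _ => hy, fun h' => absurd rfl h'⟩
  · have hx0 : (0 : _) < B.valuation x :=
      lt_of_le_of_ne zero_le' (Ne.symm (by simpa [Valuation.ne_zero_iff] using hx))
    have hmem : B.VLE x y ↔ y / x ∈ B := by
      constructor
      · rintro ⟨-, h⟩; exact h hx
      · intro h; exact ⟨fun h0 => absurd h0 hx, fun _ => h⟩
    rw [hmem, ← B.valuation_le_one_iff, map_div₀, div_le_one₀ hx0]

lemma aux_veq_iff (B : ValuationSubring K) (x y : K) :
    B.VEq x y ↔ B.valuation x = B.valuation y := by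
  rw [ValuationSubring.VEq, aux_vle_iff, aux_vle_iff, le_antisymm_iff, and_comm]

variable {L : Type*} [Field L] [Algebra K L]

lemma aux_mem_transfer {A : ValuationSubring K} {B : ValuationSubring L}
    (h : A.IsExtension B) (x : K) : x ∈ A ↔ algebraMap K L x ∈ B := by
  rw [← h]; rfl

lemma aux_vle_transfer {A : ValuationSubring K} {B : ValuationSubring L}
    (h : A.IsExtension B) (x y : K) :
    A.VLE x y ↔ B.VLE (algebraMap K L x) (algebraMap K L y) := by
  have hinj := (algebraMap K L).injective
  constructor
  · rintro ⟨h1, h2⟩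
    refine ⟨fun h0 => ?_, fun hx => ?_⟩
    · rw [h1 (hinj (by rw [h0, map_zero])), map_zero]
    · have hx' : x ≠ 0 := fun h0 => hx (by rw [h0, map_zero])
      rw [← map_div₀]
      exact (aux_mem_transfer h _).mp (h2 hx')
  · rintro ⟨h1, h2⟩
    refine ⟨fun h0 => ?_, fun hx => ?_⟩
    · have h3 := h1 (by rw [h0, map_zero])
      exact hinj (by rw [h3, map_zero])
    · have hx' : algebraMap K L x ≠ 0 := fun h0 => hx (hinj (by rw [h0, map_zero]))
      exact (aux_mem_transfer h _).mpr (by rw [map_div₀]; exact h2 hx')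

lemma aux_veq_transfer {A : ValuationSubring K} {B : ValuationSubring L}
    (h : A.IsExtension B) (x y : K) :
    A.VEq x y ↔ B.valuation (algebraMap K L x) = B.valuation (algebraMap K L y) := by
  rw [ValuationSubring.VEq, aux_vle_transfer h, aux_vle_transfer h,
    ← ValuationSubring.VEq, aux_veq_iff]

lemma aux_unit_transfer {A : ValuationSubring K} {B : ValuationSubring L}
    (h : A.IsExtension B) {x : K} (hx : A.IsUnitVal x) :
    B.valuation (algebraMap K L x) = 1 := by
  obtain ⟨hx0, h1, h2⟩ := hx
  rw [← aux_isUnitVal_iff]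
  refine ⟨fun h0 => hx0 ((algebraMap K L).injective (by rw [h0, map_zero])),
    (aux_mem_transfer h _).mp h1, ?_⟩
  rw [← map_inv₀]
  exact (aux_mem_transfer h _).mp h2

lemma aux_core {Γ : Type*} [LinearOrderedCommGroupWithZero Γ]
    {t α β s : Γ} (ht : t ≠ 0) (hβ : β ≠ 0)
    (hs : t ^ 3 = s)
    (hd : α * t ≠ β → s = max (α * t) β)
    (h3 : α ^ 3 = β ^ 2) : α * t = β ∧ t ^ 3 = β := by
  rcases lt_trichotomy (α * t) β with hlt | heq | hgt
  · exfalso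
    have hmax : s = β := by rw [hd hlt.ne, max_eq_right hlt.le]
    have h1 : (α * t) ^ 3 = β ^ 3 := by
      rw [mul_pow, h3, hs, hmax, pow_succ β 2, mul_comm]
    exact absurd h1 (pow_lt_pow_left₀ hlt zero_le' three_ne_zero).ne
  · refine ⟨heq, ?_⟩
    have h1 : t ^ 3 * β ^ 2 = β * β ^ 2 := by
      calc t ^ 3 * β ^ 2 = t ^ 3 * α ^ 3 := by rw [h3]
        _ = (α * t) ^ 3 := by rw [mul_pow, mul_comm]
        _ = β ^ 3 := by rw [heq]
        _ = β * β ^ 2 := by rw [pow_succ, mul_comm]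
    exact mul_right_cancel₀ (pow_ne_zero 2 hβ) h1
  · exfalso
    have hmax : s = α * t := by rw [hd hgt.ne', max_eq_left hgt.le]
    have ht2 : t ^ 2 = α := by
      have h1 : t ^ 2 * t = α * t := by rw [← pow_succ, hs, hmax]
      exact mul_right_cancel₀ ht h1
    have h1 : β ^ 2 = (α * t) ^ 2 := by
      rw [mul_pow, ht2, ← pow_succ, ← h3]
    exact absurd h1 (pow_lt_pow_left₀ hgt zero_le' two_ne_zero).ne

end AuxLemmas

/-- for a residually transcendental extension `w` with `w(Z)=0`, where
`Z = X³/(aX+b)`, one has `v(a³)=v(b²)` iff `w(X³)=w(aX)=w(b)`; in particular if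
`a, b` are `v`-units then `w(X)=0`. -/
theorem stmt_14 {E : Type u} [Field E] (A : ValuationSubring E)
    (h6 : A.IsUnitVal (6 : E))
    (a b : E) (hΔ : 4 * a ^ 3 + 27 * b ^ 2 ≠ 0)
    {F : Type v} [Field F] [Algebra (RatFunc E) F] [Algebra E F]
    [IsScalarTower E (RatFunc E) F]
    (y : F)
    (hy : y ^ 2 = algebraMap (RatFunc E) F
      (RatFunc.X ^ 3 + RatFunc.C a * RatFunc.X + RatFunc.C b))
    (hgen : Algebra.adjoin (RatFunc E) {y} = ⊤)
    (B : ValuationSubring F) (h : A.IsExtension B)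
    (hrt : letI := (ValuationSubring.resMap h).toAlgebra
      ¬ Algebra.IsAlgebraic (ResidueField A) (ResidueField B))
    (hZ : B.IsUnitVal (algebraMap (RatFunc E) F
      (RatFunc.X ^ 3 / (RatFunc.C a * RatFunc.X + RatFunc.C b)))) :
    (A.VEq (a ^ 3) (b ^ 2) ↔
      (B.VEq (algebraMap (RatFunc E) F (RatFunc.X ^ 3))
         (algebraMap (RatFunc E) F (RatFunc.C a * RatFunc.X)) ∧
       B.VEq (algebraMap (RatFunc E) F (RatFunc.C a * RatFunc.X))
         (algebraMap (RatFunc E) F (RatFunc.C b)))) ∧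
    (A.IsUnitVal a → A.IsUnitVal b →
      B.IsUnitVal (algebraMap (RatFunc E) F RatFunc.X)) := by

  have hinjE := (algebraMap E F).injective
  have hinjR := (algebraMap (RatFunc E) F).injective
  have hC : ∀ e : E, algebraMap (RatFunc E) F (RatFunc.C e) = algebraMap E F e := by
    intro e
    rw [IsScalarTower.algebraMap_apply E (RatFunc E) F, RatFunc.algebraMap_eq_C]
  -- nonvanishing of aX + b
  have hab : ¬ (a = 0 ∧ b = 0) := by
    rintro ⟨rfl, rfl⟩
    simp at hΔ
  have hden : (RatFunc.C a * RatFunc.X + RatFunc.C b : RatFunc E) ≠ 0 := by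
    intro h0
    apply hab
    have h1 : algebraMap (Polynomial E) (RatFunc E)
        (Polynomial.C a * Polynomial.X + Polynomial.C b) = algebraMap _ _ 0 := by
      rw [map_add, map_mul, RatFunc.algebraMap_C, RatFunc.algebraMap_C,
        RatFunc.algebraMap_X, h0, map_zero]
    have h2 := RatFunc.algebraMap_injective E h1
    constructor
    · have := congrArg (fun p => Polynomial.coeff p 1) h2
      simpa using this
    · have := congrArg (fun p => Polynomial.coeff p 0) h2
      simpa using this
  have hdenF : (algebraMap (RatFunc E) F) (RatFunc.C a * RatFunc.X + RatFunc.C b) ≠ 0 :=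
    fun h0 => hden (hinjR (by rw [h0, map_zero]))
  -- abbreviations for values
  set t := B.valuation (algebraMap (RatFunc E) F RatFunc.X) with ht_def
  set α := B.valuation (algebraMap E F a) with hα_def
  set β := B.valuation (algebraMap E F b) with hβ_def
  have htne : t ≠ 0 := by
    rw [ht_def, Valuation.ne_zero_iff]
    exact fun h0 => RatFunc.X_ne_zero (hinjR (by rw [h0, map_zero]))
  -- value of aX
  have haX : B.valuation (algebraMap (RatFunc E) F (RatFunc.C a * RatFunc.X)) = α * t := by
    rw [map_mul, map_mul, hC]
  have hX3 : B.valuation (algebraMap (RatFunc E) F (RatFunc.X ^ 3)) = t ^ 3 := by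
    rw [map_pow, map_pow]
  -- key equation t^3 = v(aX + b)
  have hkey : t ^ 3 =
      B.valuation (algebraMap (RatFunc E) F (RatFunc.C a * RatFunc.X + RatFunc.C b)) := by
    have hZval := (aux_isUnitVal_iff B _).mp hZ
    rw [map_div₀, map_div₀, map_pow, map_pow] at hZval
    exact (div_eq_one_iff_eq (by
      rw [Valuation.ne_zero_iff]; exact hdenF)).mp hZval
  -- decomposition of the valuation of the sum
  have hsum_add : (algebraMap (RatFunc E) F) (RatFunc.C a * RatFunc.X + RatFunc.C b)
      = (algebraMap (RatFunc E) F) (RatFunc.C a * RatFunc.X)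
        + (algebraMap (RatFunc E) F) (RatFunc.C b) := map_add _ _ _
  have hd : α * t ≠ β →
      B.valuation (algebraMap (RatFunc E) F (RatFunc.C a * RatFunc.X + RatFunc.C b))
        = max (α * t) β := by
    intro hne
    have hCb : B.valuation ((algebraMap (RatFunc E) F) (RatFunc.C b)) = β := by rw [hC b]
    rw [← haX, ← hCb] at hne
    rw [hsum_add, ← hCb, ← haX]
    exact Valuation.map_add_of_distinct_val _ hne
  -- translations of the three VEq statements
  have hiff1 : A.VEq (a ^ 3) (b ^ 2) ↔ α ^ 3 = β ^ 2 := by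
    rw [aux_veq_transfer h, map_pow, map_pow, map_pow, map_pow]
  have hiff2 : B.VEq (algebraMap (RatFunc E) F (RatFunc.X ^ 3))
      (algebraMap (RatFunc E) F (RatFunc.C a * RatFunc.X)) ↔ t ^ 3 = α * t := by
    rw [aux_veq_iff, haX, hX3]
  have hiff3 : B.VEq (algebraMap (RatFunc E) F (RatFunc.C a * RatFunc.X))
      (algebraMap (RatFunc E) F (RatFunc.C b)) ↔ α * t = β := by
    rw [aux_veq_iff, haX, hC]
  have hmain : A.VEq (a ^ 3) (b ^ 2) ↔
      (B.VEq (algebraMap (RatFunc E) F (RatFunc.X ^ 3))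
         (algebraMap (RatFunc E) F (RatFunc.C a * RatFunc.X)) ∧
       B.VEq (algebraMap (RatFunc E) F (RatFunc.C a * RatFunc.X))
         (algebraMap (RatFunc E) F (RatFunc.C b))) := by
    rw [hiff1, hiff2, hiff3]
    constructor
    · intro h3
      -- show a ≠ 0 and b ≠ 0
      have ha0 : a ≠ 0 := by
        rintro rfl
        apply hab
        refine ⟨rfl, ?_⟩
        have : β ^ 2 = 0 := by rw [← h3, hα_def]; simp
        have hβ0 : β = 0 := by
          exact pow_eq_zero_iff two_ne_zero |>.mp this
        rw [hβ_def, Valuation.zero_iff] at hβ0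
        exact hinjE (by rw [hβ0, map_zero])
      have hb0 : b ≠ 0 := by
        rintro rfl
        apply hab
        refine ⟨?_, rfl⟩
        have : α ^ 3 = 0 := by rw [h3, hβ_def]; simp
        have hα0 : α = 0 := pow_eq_zero_iff three_ne_zero |>.mp this
        rw [hα_def, Valuation.zero_iff] at hα0
        exact hinjE (by rw [hα0, map_zero])
      have hβne : β ≠ 0 := by
        rw [hβ_def, Valuation.ne_zero_iff]
        exact fun h0 => hb0 (hinjE (by rw [h0, map_zero]))
      obtain ⟨h1, h2⟩ := aux_core htne hβne hkey hd h3
      exact ⟨by rw [h2, ← h1], h1⟩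
    · rintro ⟨h1, h2⟩
      -- a ≠ 0 else t = 0
      have hαne : α ≠ 0 := by
        intro h0
        rw [h0, zero_mul] at h1
        exact htne (pow_eq_zero_iff three_ne_zero |>.mp h1)
      have ht2 : t ^ 2 = α := by
        have h4 : t ^ 2 * t = α * t := by rw [← pow_succ, h1]
        exact mul_right_cancel₀ htne h4
      calc α ^ 3 = (t ^ 2) ^ 3 := by rw [ht2]
        _ = (t ^ 3) ^ 2 := by rw [← pow_mul, ← pow_mul, Nat.mul_comm]
        _ = (α * t) ^ 2 := by rw [h1]
        _ = β ^ 2 := by rw [h2]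
  refine ⟨hmain, fun ha hb => ?_⟩
  have hα1 : α = 1 := aux_unit_transfer h ha
  have hβ1 : β = 1 := aux_unit_transfer h hb
  have hveq : A.VEq (a ^ 3) (b ^ 2) := by
    rw [hiff1, hα1, hβ1, one_pow, one_pow]
  obtain ⟨h1, h2⟩ := hmain.mp hveq
  have h2' := hiff3.mp h2
  rw [hα1, hβ1, one_mul] at h2'
  rw [aux_isUnitVal_iff]
  exact h2'
end

section
/- Let E be a field with valuation v, v(6)=0, and a, b ∈ E with v(Δ_{a,b}) > v(a³) = v(b²), where Δ_{a,b} = 4a³+27b² ≠ 0, and with v(ab) ∈ 2vE. Then there exists d ∈ E^× with v(d¹²a³) = v(d¹²b²) = 0, and setting α = d⁴a, β = d⁶b, one has v(Δ_{α,β}) > 0, α, β ∈ O_v^×, and E(X)[√(X³+aX+b)] ≅ E(X)[√(X³+αX+β)] as extensions of E. -/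
open IsLocalRing Polynomial

open ValuationSubring IsLocalRing Polynomial



section AuxIso

variable {E : Type*} [Field E]


noncomputable def scaleXHom (c : E) : E[X] →ₐ[E] RatFunc E :=
  aeval (RatFunc.C c * RatFunc.X)

lemma scaleXHom_apply (c : E) (p : E[X]) :
    scaleXHom c p = algebraMap E[X] (RatFunc E) (p.comp (C c * X)) := by
  rw [comp_eq_aeval, ← aeval_algebraMap_apply, map_mul, RatFunc.algebraMap_C,
    RatFunc.algebraMap_X]
  rfl

lemma scaleXHom_inj {c : E} (hc : c ≠ 0) : Function.Injective (scaleXHom c) := by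
  rw [injective_iff_map_eq_zero]
  intro p hp
  rw [scaleXHom_apply] at hp
  have h0 : p.comp (C c * X) = 0 :=
    IsFractionRing.injective E[X] (RatFunc E) (by simpa using hp)
  rcases comp_eq_zero_iff.mp h0 with h | ⟨-, h⟩
  · exact h
  · exfalso
    have := congrArg (fun q : E[X] => q.coeff 1) h
    simp [coeff_C] at this
    exact hc this

/-- The `E`-algebra endomorphism of `E(X)` with `X ↦ cX`. -/
noncomputable def scaleRF {c : E} (hc : c ≠ 0) : RatFunc E →ₐ[E] RatFunc E :=
  IsFractionRing.liftAlgHom (scaleXHom_inj hc)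

lemma scaleRF_algebraMap {c : E} (hc : c ≠ 0) (p : E[X]) :
    scaleRF hc (algebraMap E[X] (RatFunc E) p)
      = algebraMap E[X] (RatFunc E) (p.comp (C c * X)) := by
  rw [scaleRF, IsFractionRing.liftAlgHom_apply, IsFractionRing.lift_algebraMap,
    ← scaleXHom_apply]
  rfl

lemma scaleRF_inv_comp {c : E} (hc : c ≠ 0) (x : RatFunc E) :
    scaleRF hc (scaleRF (inv_ne_zero hc) x) = x := by
  have : ((scaleRF hc).toRingHom.comp (scaleRF (inv_ne_zero hc)).toRingHom).comp
      (algebraMap E[X] (RatFunc E)) = (RingHom.id (RatFunc E)).comp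
      (algebraMap E[X] (RatFunc E)) := by
    refine RingHom.ext fun p => ?_
    simp only [RingHom.comp_apply, AlgHom.toRingHom_eq_coe, RingHom.coe_coe, RingHom.id_apply,
      scaleRF_algebraMap]
    rw [comp_assoc, mul_comp, C_comp, X_comp, ← mul_assoc, ← C_mul,
      inv_mul_cancel₀ hc, C_1, one_mul, comp_X]
  have h2 := IsLocalization.ringHom_ext (nonZeroDivisors E[X]) this
  exact congrArg (fun f : RingHom _ _ => f x) h2

lemma cubic_not_square (a b : E) (g : RatFunc E) :
    g ^ 2 ≠ RatFunc.X ^ 3 + RatFunc.C a * RatFunc.X + RatFunc.C b := by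
  intro hg
  set p : E[X] := X ^ 3 + C a * X + C b with hp
  have hmap : (RatFunc.X ^ 3 + RatFunc.C a * RatFunc.X + RatFunc.C b : RatFunc E)
      = algebraMap E[X] (RatFunc E) p := by
    simp [hp, RatFunc.algebraMap_C, RatFunc.algebraMap_X]
  rw [hmap] at hg
  have hint : IsIntegral E[X] g := by
    refine ⟨X ^ 2 - C p, monic_X_pow_sub_C p (by norm_num), ?_⟩
    simp [eval₂_sub, ← hg]
  obtain ⟨q, hq⟩ := IsIntegrallyClosed.isIntegral_iff.mp hint
  have hq2 : q ^ 2 = p := by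
    apply IsFractionRing.injective E[X] (RatFunc E)
    rw [map_pow, hq, hg]
  have hdegp : p.natDegree = 3 := by
    rw [hp]; compute_degree!
  have := natDegree_pow q 2
  rw [hq2, hdegp] at this
  omega

universe v w

lemma iso_aux (a b d : E) (hd : d ≠ 0)
    {F : Type v} [Field F] [Algebra (RatFunc E) F] [Algebra E F]
    [IsScalarTower E (RatFunc E) F]
    (y : F)
    (hy : y ^ 2 = algebraMap (RatFunc E) F
      (RatFunc.X ^ 3 + RatFunc.C a * RatFunc.X + RatFunc.C b))
    (hgen : Algebra.adjoin (RatFunc E) {y} = ⊤)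
    {F' : Type w} [Field F'] [Algebra (RatFunc E) F'] [Algebra E F']
    [IsScalarTower E (RatFunc E) F']
    (y' : F')
    (hy' : y' ^ 2 = algebraMap (RatFunc E) F'
      (RatFunc.X ^ 3 + RatFunc.C (d ^ 4 * a) * RatFunc.X + RatFunc.C (d ^ 6 * b)))
    (hgen' : Algebra.adjoin (RatFunc E) {y'} = ⊤) :
    Nonempty (F ≃ₐ[E] F') := by
  have hd2 : (d ^ 2 : E) ≠ 0 := pow_ne_zero _ hd
  set g' : RatFunc E := RatFunc.X ^ 3 + RatFunc.C (d ^ 4 * a) * RatFunc.X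
      + RatFunc.C (d ^ 6 * b) with hg'
  have hirr' : Irreducible (X ^ 2 - C g' : (RatFunc E)[X]) :=
    X_pow_sub_C_irreducible_of_prime Nat.prime_two
      (fun t => cubic_not_square (d ^ 4 * a) (d ^ 6 * b) t)
  have haev : (Polynomial.aeval y') (X ^ 2 - C g' : (RatFunc E)[X]) = 0 := by
    simp [hy']
  have hint' : IsIntegral (RatFunc E) y' :=
    ⟨X ^ 2 - C g', monic_X_pow_sub_C _ two_ne_zero, by simpa [Polynomial.aeval_def] using haev⟩
  have hmin : minpoly (RatFunc E) y' = X ^ 2 - C g' :=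
    (minpoly.eq_of_irreducible_of_monic hirr' haev (monic_X_pow_sub_C _ two_ne_zero)).symm
  -- the equivalence AdjoinRoot (minpoly y') ≃ F'
  let e' : AdjoinRoot (minpoly (RatFunc E) y') ≃ₐ[RatFunc E] F' :=
    (minpoly.equivAdjoin hint').trans ((Subalgebra.equivOfEq _ _ hgen').trans
      Subalgebra.topEquiv)
  have he'root : e' (AdjoinRoot.root _) = y' := by
    have h0 : (minpoly.equivAdjoin (R := RatFunc E) hint') (AdjoinRoot.root _)
        = ⟨y', Algebra.self_mem_adjoin_singleton _ _⟩ := by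
      apply Subtype.ext
      rw [minpoly.coe_equivAdjoin, ← AdjoinRoot.mk_X]
      exact AdjoinRoot.Minpoly.coe_toAdjoin_mk_X
    simp [e', AlgEquiv.trans_apply, h0]
  -- the twisted base map
  let σ : RatFunc E →ₐ[E] RatFunc E := scaleRF hd2
  let τ : RatFunc E →+* F := (algebraMap (RatFunc E) F).comp σ.toRingHom
  let z : F := algebraMap E F (d ^ 3) * y
  have hτg' : τ g' = algebraMap E F (d ^ 6) *
      algebraMap (RatFunc E) F (RatFunc.X ^ 3 + RatFunc.C a * RatFunc.X + RatFunc.C b) := by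
    have h1 : g' = algebraMap E[X] (RatFunc E)
        (X ^ 3 + C (d ^ 4 * a) * X + C (d ^ 6 * b)) := by
      simp [hg', RatFunc.algebraMap_C, RatFunc.algebraMap_X]
    have h2 : (X ^ 3 + C (d ^ 4 * a) * X + C (d ^ 6 * b) : E[X]).comp (C (d ^ 2) * X)
        = C (d ^ 6) * (X ^ 3 + C a * X + C b) := by
      simp only [add_comp, mul_comp, pow_comp, X_comp, C_comp, map_mul, map_pow]
      ring
    show (algebraMap (RatFunc E) F) (σ g') = _
    rw [h1, scaleRF_algebraMap (c := d ^ 2) hd2, h2, map_mul, map_mul]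
    congr 1
    · rw [RatFunc.algebraMap_C, IsScalarTower.algebraMap_apply E (RatFunc E) F,
        RatFunc.algebraMap_eq_C]
    · simp [RatFunc.algebraMap_C, RatFunc.algebraMap_X]
  have hz : (minpoly (RatFunc E) y').eval₂ τ z = 0 := by
    rw [hmin]
    simp only [eval₂_sub, eval₂_pow, eval₂_X, eval₂_C]
    rw [hτg']
    show (algebraMap E F (d ^ 3) * y) ^ 2 - _ = 0
    rw [mul_pow, hy, ← map_pow, ← pow_mul]
    norm_num
  -- the homomorphism F' → F
  let Φ₀ : AdjoinRoot (minpoly (RatFunc E) y') →+* F := AdjoinRoot.lift τ z hz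
  let Φ : F' →+* F := Φ₀.comp e'.symm.toAlgHom.toRingHom
  have hΦalg : ∀ r : RatFunc E, Φ (algebraMap (RatFunc E) F' r)
      = algebraMap (RatFunc E) F (σ r) := by
    intro r
    show Φ₀ (e'.symm (algebraMap (RatFunc E) F' r)) = _
    rw [AlgEquiv.commutes, AdjoinRoot.algebraMap_eq]
    exact AdjoinRoot.lift_of hz
  have hΦy : Φ y' = z := by
    show Φ₀ (e'.symm y') = z
    have hsy : e'.symm y' = AdjoinRoot.root _ := (AlgEquiv.symm_apply_eq e').mpr he'root.symm
    rw [hsy]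
    exact AdjoinRoot.lift_root hz
  have hΦE : ∀ c : E, Φ (algebraMap E F' c) = algebraMap E F c := by
    intro c
    rw [IsScalarTower.algebraMap_apply E (RatFunc E) F', hΦalg, AlgHom.commutes,
      ← IsScalarTower.algebraMap_apply]
  have hsurj : Function.Surjective Φ := by
    have hyr : y ∈ Φ.range := by
      refine ⟨algebraMap E F' ((d ^ 3)⁻¹) * y', ?_⟩
      rw [map_mul, hΦE, hΦy]
      show _ * (algebraMap E F (d ^ 3) * y) = y
      rw [← mul_assoc, ← map_mul, inv_mul_cancel₀ (pow_ne_zero _ hd), map_one, one_mul]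
    have hrr : ∀ r : RatFunc E, algebraMap (RatFunc E) F r ∈ Φ.range := by
      intro r
      refine ⟨algebraMap (RatFunc E) F' (scaleRF (inv_ne_zero hd2) r), ?_⟩
      rw [hΦalg]
      congr 1
      exact scaleRF_inv_comp hd2 r
    intro x
    have hx : x ∈ (Algebra.adjoin (RatFunc E) ({y} : Set F)).toSubring := by
      rw [hgen]; trivial
    rw [Algebra.adjoin_eq_ring_closure] at hx
    have hle : Subring.closure (Set.range (algebraMap (RatFunc E) F) ∪ {y}) ≤ Φ.range := by
      refine Subring.closure_le.mpr ?_
      rintro t (⟨r, rfl⟩ | ht)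
      · exact hrr r
      · simpa using ht ▸ hyr
    obtain ⟨t, ht⟩ := hle hx
    exact ⟨t, ht⟩
  let ΦA : F' →ₐ[E] F := { Φ with commutes' := hΦE }
  exact ⟨(AlgEquiv.ofBijective ΦA ⟨Φ.injective, hsurj⟩).symm⟩

end AuxIso

section AuxVal

variable {K : Type*} [Field K]

lemma isUnitVal_pow {A : ValuationSubring K} {x : K} (h : A.IsUnitVal x) (n : ℕ) :
    A.IsUnitVal (x ^ n) :=
  ⟨pow_ne_zero n h.1, pow_mem h.2.1 n, by rw [← inv_pow]; exact pow_mem h.2.2 n⟩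

end AuxVal

/-- if `v(Δ) > v(a³) = v(b²)` and `v(ab) ∈ 2vE`, there is `d ∈ E^×`
with `v(d¹²a³) = v(d¹²b²) = 0`, and for `α = d⁴a`, `β = d⁶b` one has `v(Δ_{α,β}) > 0`,
`α, β ∈ O_v^×`, and `E(X)[√(X³+aX+b)] ≅ E(X)[√(X³+αX+β)]` over `E`. -/
theorem stmt_16 {E : Type u} [Field E] (A : ValuationSubring E)
    (h6 : A.IsUnitVal (6 : E))
    (a b : E) (hΔ0 : 4 * a ^ 3 + 27 * b ^ 2 ≠ 0)
    (hgt : A.VLT (a ^ 3) (4 * a ^ 3 + 27 * b ^ 2))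
    (heq : A.VEq (a ^ 3) (b ^ 2))
    (hab : A.ValMultipleOf 2 (a * b))
    {F : Type v} [Field F] [Algebra (RatFunc E) F] [Algebra E F]
    [IsScalarTower E (RatFunc E) F]
    (y : F)
    (hy : y ^ 2 = algebraMap (RatFunc E) F
      (RatFunc.X ^ 3 + RatFunc.C a * RatFunc.X + RatFunc.C b))
    (hgen : Algebra.adjoin (RatFunc E) {y} = ⊤) :
    ∃ d : E, d ≠ 0 ∧
      A.IsUnitVal (d ^ 12 * a ^ 3) ∧ A.IsUnitVal (d ^ 12 * b ^ 2) ∧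
      (4 * (d ^ 4 * a) ^ 3 + 27 * (d ^ 6 * b) ^ 2)⁻¹ ∉ A ∧
      A.IsUnitVal (d ^ 4 * a) ∧ A.IsUnitVal (d ^ 6 * b) ∧
      ∀ (F' : Type w) [Field F'],
        ∀ [Algebra (RatFunc E) F'] [Algebra E F'] [IsScalarTower E (RatFunc E) F'],
        ∀ y' : F',
          y' ^ 2 = algebraMap (RatFunc E) F'
            (RatFunc.X ^ 3 + RatFunc.C (d ^ 4 * a) * RatFunc.X +
              RatFunc.C (d ^ 6 * b)) →
          Algebra.adjoin (RatFunc E) {y'} = ⊤ →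
          Nonempty (F ≃ₐ[E] F') := by
    -- `a` and `b` are nonzero
  have ha0 : a ≠ 0 := by
    rintro rfl
    have hb2 := heq.1.1 (by ring)
    have hb : b = 0 := by
      have := pow_eq_zero_iff (n := 2) (by norm_num) |>.mp hb2
      exact this
    apply hΔ0; simp [hb]
  have hb0 : b ≠ 0 := by
    rintro rfl
    have ha3 := heq.2.1 (by ring)
    have ha : a = 0 := by
      have := pow_eq_zero_iff (n := 3) (by norm_num) |>.mp ha3
      exact this
    apply hΔ0; simp [ha]
  obtain ⟨t, ht0, hu1, huA, huI⟩ := hab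
  have hw₁ : b ^ 2 / a ^ 3 ∈ A := heq.1.2 (pow_ne_zero 3 ha0)
  have hw₂ : a ^ 3 / b ^ 2 ∈ A := heq.2.2 (pow_ne_zero 2 hb0)
  set d : E := b ^ 2 / (a ^ 2 * t) with hd_def
  have hd : d ≠ 0 :=
    div_ne_zero (pow_ne_zero _ hb0) (mul_ne_zero (pow_ne_zero _ ha0) ht0)
  have I1 : d ^ 4 * a = (a * b / t ^ 2) ^ 2 * (b ^ 2 / a ^ 3) ^ 3 := by
    rw [hd_def]; field_simp
  have I2 : (d ^ 4 * a)⁻¹ = ((a * b / t ^ 2)⁻¹) ^ 2 * (a ^ 3 / b ^ 2) ^ 3 := by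
    rw [hd_def]; field_simp
  have I3 : d ^ 6 * b = (a * b / t ^ 2) ^ 3 * (b ^ 2 / a ^ 3) ^ 5 := by
    rw [hd_def]; field_simp
  have I4 : (d ^ 6 * b)⁻¹ = ((a * b / t ^ 2)⁻¹) ^ 3 * (a ^ 3 / b ^ 2) ^ 5 := by
    rw [hd_def]; field_simp
  have hu4a : A.IsUnitVal (d ^ 4 * a) :=
    ⟨mul_ne_zero (pow_ne_zero _ hd) ha0,
      I1 ▸ mul_mem (pow_mem huA 2) (pow_mem hw₁ 3),
      I2 ▸ mul_mem (pow_mem huI 2) (pow_mem hw₂ 3)⟩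
  have hu6b : A.IsUnitVal (d ^ 6 * b) :=
    ⟨mul_ne_zero (pow_ne_zero _ hd) hb0,
      I3 ▸ mul_mem (pow_mem huA 3) (pow_mem hw₁ 5),
      I4 ▸ mul_mem (pow_mem huI 3) (pow_mem hw₂ 5)⟩
  have h12a : d ^ 12 * a ^ 3 = (d ^ 4 * a) ^ 3 := by ring
  have h12b : d ^ 12 * b ^ 2 = (d ^ 6 * b) ^ 2 := by ring
  have hu12a3 : A.IsUnitVal (d ^ 12 * a ^ 3) := h12a ▸ isUnitVal_pow hu4a 3
  have hu12b2 : A.IsUnitVal (d ^ 12 * b ^ 2) := h12b ▸ isUnitVal_pow hu6b 2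
  refine ⟨d, hd, hu12a3, hu12b2, ?_, hu4a, hu6b, ?_⟩
  · intro hmem
    apply hgt
    refine ⟨fun h => absurd h hΔ0, fun _ => ?_⟩
    have hΔ'0 : 4 * (d ^ 4 * a) ^ 3 + 27 * (d ^ 6 * b) ^ 2 ≠ 0 := by
      have h12 : 4 * (d ^ 4 * a) ^ 3 + 27 * (d ^ 6 * b) ^ 2
          = d ^ 12 * (4 * a ^ 3 + 27 * b ^ 2) := by ring
      rw [h12]
      exact mul_ne_zero (pow_ne_zero _ hd) hΔ0
    have hid : a ^ 3 / (4 * a ^ 3 + 27 * b ^ 2)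
        = (d ^ 12 * a ^ 3) * (4 * (d ^ 4 * a) ^ 3 + 27 * (d ^ 6 * b) ^ 2)⁻¹ := by
      rw [eq_comm, mul_comm, inv_mul_eq_div, div_eq_div_iff hΔ'0 hΔ0]
      ring
    rw [hid]
    exact mul_mem hu12a3.2.1 hmem
  · intro F' _ _ _ _ y' hy' hgen'
    exact iso_aux a b d hd y hy hgen y' hy' hgen'
end
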